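/- arXiv:2503.24373 — 9 statements merged into one kernel-verified Lean document; each statement's English description precedes it below -/
import Mathlib

section
/- Let 1 < q ≤ 2, let f ∈ ℝ with f ≠ 0, and let x ∈ ℝ. Define γ_q(x; t) for t > 0 by γ_q(x; t) = (q/2)·t^{q-2}·x² if |x| ≤ t, and γ_q(x; t) = |x|^q − (1 − q/2)·t^q otherwise. Then ((q−1)/(q·2^q))·γ_q(x; |f|) ≤ |f + x|^q − |f|^q − q·sign(f)·|f|^{q−1}·x ≤ 2^q·γ_q(x; |f|). -/
/-!
Both sides are `q`-homogeneous, so the substitution `x = f * u` reduces the claim to `f = 1`, i.e.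
to comparing `φ(u) = |1 + u| ^ q - 1 - q * u` with `γ_q(u; 1)`.

For `|u| ≤ 1`, `φ` lies between `q (q - 1) 2 ^ (q - 2) u ^ 2 / 2` and `q u ^ 2 / 2`: each difference
vanishes at `0` and has a derivative with the sign of `u`, by the concavity of `t ↦ t ^ (q - 1)`.
For `|u| ≥ 1` the upper bound comes from `|1 + u| ≤ 2 |u|` (resp. `|1 + u| ≤ |u|` when `u ≤ -1`)
together with `1 + q ≤ 2 ^ q` and `2 ^ (q - 1) ≤ q`. The lower bound follows for `u ≥ 1` from the
monotonicity of the difference on `[1, ∞)`, and for `u ≤ -1` from the convexity of `t ↦ t ^ q`.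
-/

noncomputable def gammaQ (q x f : ℝ) : ℝ :=
  if |x| ≤ f then (q / 2) * f ^ (q - 2) * x ^ 2 else |x| ^ q - (1 - q / 2) * f ^ q

open Real Set

noncomputable def bregmanAtOne (q u : ℝ) : ℝ := |1 + u| ^ q - 1 - q * u

lemma gammaQ_abs (q x t : ℝ) : gammaQ q |x| t = gammaQ q x t := by
  simp only [gammaQ, abs_abs, sq_abs]

lemma gammaQ_mul_mul {t : ℝ} (ht : 0 < t) (q u : ℝ) {s : ℝ} (hs : 0 ≤ s) :
    gammaQ q (t * u) (t * s) = t ^ q * gammaQ q u s := by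
  have hsq : t ^ (q - 2) * t ^ 2 = t ^ q := by
    rw [← rpow_natCast, ← rpow_add ht]; norm_num
  simp only [gammaQ, abs_mul, abs_of_pos ht, mul_le_mul_iff_right₀ ht, mul_rpow ht.le hs,
    mul_rpow ht.le (abs_nonneg u)]
  split_ifs
  · rw [← hsq]; ring
  · ring

lemma bregman_eq_abs_rpow_mul_bregmanAtOne {f : ℝ} (hf : f ≠ 0) (q x : ℝ) :
    |f + x| ^ q - |f| ^ q - q * Real.sign f * |f| ^ (q - 1) * x =
      |f| ^ q * bregmanAtOne q (x / f) := by
  have hf' : 0 < |f| := abs_pos.2 hf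
  have hpow : |f + x| ^ q = |f| ^ q * |1 + x / f| ^ q := by
    rw [← mul_rpow hf'.le (abs_nonneg _), ← abs_mul, mul_add, mul_one, mul_div_cancel₀ _ hf]
  have hlin : Real.sign f * |f| ^ (q - 1) * x = |f| ^ q * (x / f) := by
    rw [rpow_sub_one hf'.ne']
    rcases hf.lt_or_gt with h | h
    · rw [sign_of_neg h, abs_of_neg h]; field_simp
    · rw [sign_of_pos h, abs_of_pos h]; field_simp
  rw [bregmanAtOne, hpow]
  linear_combination (-q) * hlin

lemma Real.rpow_add_le_mul_rpow_add_rpow {a b p : ℝ} (ha : 0 ≤ a) (hb : 0 ≤ b) (hp : 1 ≤ p) :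
    (a + b) ^ p ≤ 2 ^ (p - 1) * (a ^ p + b ^ p) := by
  lift a to NNReal using ha
  lift b to NNReal using hb
  exact_mod_cast NNReal.rpow_add_le_mul_rpow_add_rpow a b hp

lemma one_add_le_two_rpow {q : ℝ} (hq : 1 ≤ q) : 1 + q ≤ 2 ^ q := by
  simpa [one_add_one_eq_two] using one_add_mul_self_le_rpow_one_add (s := 1) (by norm_num) hq

lemma two_rpow_sub_one_le {q : ℝ} (hq1 : 1 ≤ q) (hq2 : q ≤ 2) : 2 ^ (q - 1) ≤ q := by
  have := rpow_one_add_le_one_add_mul_self (s := 1) (by norm_num) (p := q - 1)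
    (by linarith) (by linarith)
  rw [one_add_one_eq_two] at this
  linarith

lemma two_rpow_eq_two_mul {q : ℝ} : (2 : ℝ) ^ q = 2 * 2 ^ (q - 1) := by
  rw [rpow_sub_one two_ne_zero]; ring

lemma sub_one_div_mul_two_rpow_mul_half_le {q : ℝ} (hq : 1 ≤ q) :
    (q - 1) / (q * 2 ^ q) * (q / 2) ≤ q * (q - 1) * 2 ^ (q - 2) / 2 := by
  set P : ℝ := 2 ^ (q - 2)
  have hP : 2⁻¹ ≤ P := by
    rw [← rpow_neg_one]; exact rpow_le_rpow_of_exponent_le one_le_two (by linarith)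
  have h2 : (2 : ℝ) ^ q = 4 * P := by
    simp only [P]; rw [rpow_sub zero_lt_two]; norm_num; ring
  have hlhs : (q - 1) / (q * 2 ^ q) * (q / 2) = (q - 1) / (8 * P) := by
    rw [h2]; field_simp; ring
  rw [hlhs, div_le_iff₀ (by positivity)]
  nlinarith [mul_nonneg (by linarith : 0 ≤ q - 1) (by nlinarith : 0 ≤ q * (4 * P ^ 2) - 1)]

lemma two_rpow_mul_one_sub_half_le_one {q : ℝ} (hq1 : 1 ≤ q) (hq2 : q ≤ 2) :
    2 ^ q * (1 - q / 2) ≤ 1 := by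
  rw [two_rpow_eq_two_mul]
  nlinarith [two_rpow_sub_one_le hq1 hq2]

lemma le_of_hasDerivAt_of_mul_nonneg {g g' : ℝ → ℝ} {a b x : ℝ}
    (hd : ∀ y, HasDerivAt g (g' y) y) (hsign : ∀ y ∈ Ioo a b, 0 ≤ y * g' y)
    (ha : a ≤ 0) (hb : 0 ≤ b) (hx : x ∈ Icc a b) : g 0 ≤ g x := by
  have hcont : ∀ s, ContinuousOn g s := fun s y _ => (hd y).continuousAt.continuousWithinAt
  rcases le_total 0 x with h | h
  · refine monotoneOn_of_hasDerivWithinAt_nonneg (convex_Icc 0 b) (hcont _)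
      (fun y _ => (hd y).hasDerivWithinAt) (fun y hy => ?_) ⟨le_rfl, hb⟩ ⟨h, hx.2⟩ h
    rw [interior_Icc] at hy
    exact nonneg_of_mul_nonneg_right (hsign y ⟨ha.trans_lt hy.1, hy.2⟩) hy.1
  · refine antitoneOn_of_hasDerivWithinAt_nonpos (convex_Icc a 0) (hcont _)
      (fun y _ => (hd y).hasDerivWithinAt) (fun y hy => ?_) ⟨hx.1, h⟩ ⟨ha, le_rfl⟩ h
    rw [interior_Icc] at hy
    exact nonpos_of_mul_nonneg_right (hsign y ⟨hy.1, hy.2.trans_le hb⟩) hy.2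

lemma mul_one_add_rpow_sub_one_sub_nonneg {q s : ℝ} (hq1 : 1 ≤ q) (hq2 : q ≤ 2)
    (hs : s ∈ Icc (-1) 1) :
    0 ≤ s * ((1 + s) ^ (q - 1) - 1 - (q - 1) * 2 ^ (q - 2) * s) := by
  set h : ℝ → ℝ := fun t => (1 + t) ^ (q - 1) - 1 - (q - 1) * 2 ^ (q - 2) * t
  have hmono : MonotoneOn h (Icc (-1) 1) := by
    refine monotoneOn_of_hasDerivWithinAt_nonneg
      (f' := fun t => (q - 1) * ((1 + t) ^ (q - 2) - 2 ^ (q - 2)))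
      (convex_Icc _ _) ?_ (fun y hy => ?_) (fun y hy => ?_)
    · have := continuous_rpow_const (q := q - 1) (by linarith)
      exact Continuous.continuousOn (by fun_prop)
    · rw [interior_Icc] at hy
      have := (((hasDerivAt_id y).const_add 1).rpow_const (p := q - 1)
        (Or.inl (ne_of_gt (by simp only [id]; linarith [hy.1])))).sub_const 1
        |>.sub ((hasDerivAt_id y).const_mul ((q - 1) * 2 ^ (q - 2)))
      refine (this.congr_deriv ?_).hasDerivWithinAt
      simp only [id, show q - 1 - 1 = q - 2 by ring]; ring
    · rw [interior_Icc] at hy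
      refine mul_nonneg (by linarith) (sub_nonneg.2 ?_)
      exact rpow_le_rpow_of_nonpos (by linarith [hy.1]) (by linarith [hy.2]) (by linarith)
  have h0 : h 0 = 0 := by simp [h]
  have h0mem : (0 : ℝ) ∈ Icc (-1) 1 := by norm_num
  rcases le_total 0 s with hs0 | hs0
  · exact mul_nonneg hs0 (h0 ▸ hmono h0mem hs hs0)
  · exact mul_nonneg_of_nonpos_of_nonpos hs0 (h0 ▸ hmono hs h0mem hs0)

lemma bregmanAtOne_of_neg_one_le {q u : ℝ} (hu : -1 ≤ u) :
    bregmanAtOne q u = (1 + u) ^ q - 1 - q * u := by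
  rw [bregmanAtOne, abs_of_nonneg (by linarith)]

lemma hasDerivAt_one_add_rpow_sub {q : ℝ} (hq : 1 ≤ q) (y : ℝ) :
    HasDerivAt (fun u => (1 + u) ^ q - 1 - q * u) (q * ((1 + y) ^ (q - 1) - 1)) y := by
  have := (((hasDerivAt_id y).const_add 1).rpow_const (p := q) (Or.inr hq)).sub_const 1
    |>.sub ((hasDerivAt_id y).const_mul q)
  exact this.congr_deriv (by simp only [id]; ring)

lemma mul_sq_le_bregmanAtOne {q u : ℝ} (hq1 : 1 ≤ q) (hq2 : q ≤ 2) (hu : |u| ≤ 1) :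
    q * (q - 1) * 2 ^ (q - 2) / 2 * u ^ 2 ≤ bregmanAtOne q u := by
  rw [abs_le] at hu
  have hd (y : ℝ) :
      HasDerivAt (fun u => (1 + u) ^ q - 1 - q * u - q * (q - 1) * 2 ^ (q - 2) / 2 * u ^ 2)
        (q * ((1 + y) ^ (q - 1) - 1 - (q - 1) * 2 ^ (q - 2) * y)) y :=
    ((hasDerivAt_one_add_rpow_sub hq1 y).sub ((hasDerivAt_pow 2 y).const_mul _)).congr_deriv
      (by ring)
  have hmin := le_of_hasDerivAt_of_mul_nonneg hd (fun y hy => ?_) (by norm_num) zero_le_one hu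
  · simp only [add_zero, one_rpow] at hmin
    rw [bregmanAtOne_of_neg_one_le hu.1]
    linarith
  · rw [mul_left_comm]
    exact mul_nonneg (by linarith)
      (mul_one_add_rpow_sub_one_sub_nonneg hq1 hq2 (Ioo_subset_Icc_self hy))

lemma bregmanAtOne_le_mul_sq {q u : ℝ} (hq1 : 1 ≤ q) (hq2 : q ≤ 2) (hu : -1 ≤ u) :
    bregmanAtOne q u ≤ q / 2 * u ^ 2 := by
  have hd (y : ℝ) : HasDerivAt (fun u => q / 2 * u ^ 2 - ((1 + u) ^ q - 1 - q * u))
      (q * ((1 + y) - (1 + y) ^ (q - 1))) y :=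
    (((hasDerivAt_pow 2 y).const_mul _).sub (hasDerivAt_one_add_rpow_sub hq1 y)).congr_deriv
      (by ring)
  have hmin := le_of_hasDerivAt_of_mul_nonneg hd (fun y hy => ?_) (by norm_num) (abs_nonneg u)
    ⟨hu, le_abs_self u⟩
  · simp only [add_zero, one_rpow] at hmin
    rw [bregmanAtOne_of_neg_one_le hu]
    linarith
  · rw [mul_left_comm]
    refine mul_nonneg (by linarith) ?_
    rcases le_total 0 y with hy0 | hy0
    · refine mul_nonneg hy0 (sub_nonneg.2 ?_)
      simpa using rpow_le_rpow_of_exponent_le (x := 1 + y) (by linarith) (by linarith : q - 1 ≤ 1)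
    · refine mul_nonneg_of_nonpos_of_nonpos hy0 (sub_nonpos.2 ?_)
      simpa using rpow_le_rpow_of_exponent_ge (x := 1 + y) (by linarith [hy.1]) (by linarith)
        (by linarith : q - 1 ≤ 1)

lemma bregmanAtOne_le_of_one_le_abs {q u : ℝ} (hq : 1 ≤ q) (hu : 1 ≤ |u|) :
    bregmanAtOne q u ≤ 2 ^ q * |u| ^ q - 1 := by
  rcases le_total 0 u with hu0 | hu0
  · rw [abs_of_nonneg hu0] at hu ⊢
    have : (1 + u) ^ q ≤ 2 ^ q * u ^ q := by
      rw [← mul_rpow zero_le_two hu0]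
      exact rpow_le_rpow (by linarith) (by linarith) (by linarith)
    rw [bregmanAtOne_of_neg_one_le (by linarith)]
    nlinarith
  · rw [abs_of_nonpos hu0] at hu ⊢
    have h1 : |1 + u| ^ q ≤ (-u) ^ q :=
      rpow_le_rpow (abs_nonneg _) (by rw [abs_of_nonpos (by linarith)]; linarith) (by linarith)
    have h2 : -u ≤ (-u) ^ q := by
      simpa using rpow_le_rpow_of_exponent_le hu hq
    have h3 : (1 + q) * (-u) ^ q ≤ 2 ^ q * (-u) ^ q :=
      mul_le_mul_of_nonneg_right (one_add_le_two_rpow hq) (by positivity)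
    rw [bregmanAtOne]
    nlinarith

lemma mul_rpow_sub_le_bregmanAtOne_of_one_le {q u : ℝ} (hq1 : 1 ≤ q) (hq2 : q ≤ 2)
    (hu : 1 ≤ u) :
    (q - 1) / (q * 2 ^ q) * (u ^ q - (1 - q / 2)) ≤ bregmanAtOne q u := by
  set c := (q - 1) / (q * 2 ^ q)
  set P : ℝ := 2 ^ (q - 1)
  have hP : (1 + q) / 2 ≤ P := by
    have := one_add_le_two_rpow hq1; rw [two_rpow_eq_two_mul] at this; linarith
  have hc0 : 0 ≤ c := by positivity
  have hcP : c * P = (q - 1) / (2 * q) := by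
    simp only [c, P]; rw [two_rpow_eq_two_mul (q := q)]; field_simp
  have hcP' : c * P ≤ (q - 1) / 2 := by
    rw [hcP]; exact div_le_div_of_nonneg_left (by linarith) (by norm_num) (by linarith)
  have hc1 : c ≤ 1 := by nlinarith
  have hd (y : ℝ) : HasDerivAt (fun u => (1 + u) ^ q - 1 - q * u - c * (u ^ q - (1 - q / 2)))
      (q * ((1 + y) ^ (q - 1) - 1 - c * y ^ (q - 1))) y :=
    ((hasDerivAt_one_add_rpow_sub hq1 y).sub
      (((hasDerivAt_id y).rpow_const (Or.inr hq1)).sub_const _ |>.const_mul c)).congr_deriv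
      (by simp only [id]; ring)
  have hmono := monotoneOn_of_hasDerivWithinAt_nonneg (convex_Ici 1)
    (fun y _ => (hd y).continuousAt.continuousWithinAt) (fun y _ => (hd y).hasDerivWithinAt)
    (fun y hy => ?_) (mem_Ici.2 le_rfl) hu hu
  · have hF1 : c * (q / 2) ≤ 2 ^ q - 1 - q := by
      have := mul_sq_le_bregmanAtOne hq1 hq2 (u := 1) (by norm_num)
      rw [bregmanAtOne_of_neg_one_le (by norm_num), one_add_one_eq_two] at this
      nlinarith [sub_one_div_mul_two_rpow_mul_half_le hq1]
    simp only [one_add_one_eq_two, one_rpow] at hmono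
    rw [bregmanAtOne_of_neg_one_le (by linarith)]
    linarith
  · rw [interior_Ici, mem_Ioi] at hy
    -- split `(1 + y) ^ (q - 1)` with weights `1 - c` and `c`, then use `(1 - c) * P ≥ 1`
    have hA : P ≤ (1 + y) ^ (q - 1) := rpow_le_rpow zero_le_two (by linarith) (by linarith)
    have hB : y ^ (q - 1) ≤ (1 + y) ^ (q - 1) :=
      rpow_le_rpow (by linarith) (by linarith) (by linarith)
    refine mul_nonneg (by linarith) ?_
    nlinarith [mul_le_mul_of_nonneg_left hA (sub_nonneg.2 hc1), mul_le_mul_of_nonneg_left hB hc0]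

lemma mul_rpow_sub_le_bregmanAtOne_of_le_neg_one {q u : ℝ} (hq1 : 1 ≤ q) (hq2 : q ≤ 2)
    (hu : u ≤ -1) :
    (q - 1) / (q * 2 ^ q) * ((-u) ^ q - (1 - q / 2)) ≤ bregmanAtOne q u := by
  set c := (q - 1) / (q * 2 ^ q)
  have hc0 : 0 ≤ c := by positivity
  have hcP : c * 2 ^ (q - 1) = (q - 1) / (2 * q) := by
    simp only [c]; rw [two_rpow_eq_two_mul (q := q)]; field_simp
  have hd : (q - 1) / (2 * q) ≤ 1 := by rw [div_le_one (by linarith)]; linarith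
  have hconv : (-u) ^ q ≤ 2 ^ (q - 1) * ((-u - 1) ^ q + 1) := by
    simpa using
      Real.rpow_add_le_mul_rpow_add_rpow (a := -u - 1) (b := 1) (by linarith) zero_le_one hq1
  have habs : |1 + u| = -u - 1 := by rw [abs_of_nonpos (by linarith)]; ring
  have hW : 0 ≤ (-u - 1) ^ q := rpow_nonneg (by linarith) q
  rw [bregmanAtOne, habs]
  have hd' : (q - 1) / (2 * q) ≤ q - 1 := div_le_self (by linarith) (by linarith)
  nlinarith [mul_le_mul_of_nonneg_left hconv hc0, mul_le_mul_of_nonneg_left hd hW,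
    mul_nonneg hc0 (by linarith : 0 ≤ 1 - q / 2)]

lemma mul_rpow_sub_le_bregmanAtOne {q u : ℝ} (hq1 : 1 ≤ q) (hq2 : q ≤ 2) (hu : 1 ≤ |u|) :
    (q - 1) / (q * 2 ^ q) * (|u| ^ q - (1 - q / 2)) ≤ bregmanAtOne q u := by
  rcases le_total 0 u with hu0 | hu0
  · rw [abs_of_nonneg hu0] at hu ⊢
    exact mul_rpow_sub_le_bregmanAtOne_of_one_le hq1 hq2 hu
  · rw [abs_of_nonpos hu0] at hu ⊢
    exact mul_rpow_sub_le_bregmanAtOne_of_le_neg_one hq1 hq2 (by linarith)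

theorem bregmanAtOne_bounds {q : ℝ} (hq1 : 1 ≤ q) (hq2 : q ≤ 2) (u : ℝ) :
    (q - 1) / (q * 2 ^ q) * gammaQ q u 1 ≤ bregmanAtOne q u ∧
      bregmanAtOne q u ≤ 2 ^ q * gammaQ q u 1 := by
  by_cases hu : |u| ≤ 1
  · have hγ : gammaQ q u 1 = q / 2 * u ^ 2 := by simp [gammaQ, hu]
    rw [hγ]
    constructor
    · calc (q - 1) / (q * 2 ^ q) * (q / 2 * u ^ 2)
          ≤ q * (q - 1) * 2 ^ (q - 2) / 2 * u ^ 2 := by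
            rw [← mul_assoc]
            exact mul_le_mul_of_nonneg_right (sub_one_div_mul_two_rpow_mul_half_le hq1)
              (sq_nonneg u)
        _ ≤ bregmanAtOne q u := mul_sq_le_bregmanAtOne hq1 hq2 hu
    · calc bregmanAtOne q u ≤ q / 2 * u ^ 2 := bregmanAtOne_le_mul_sq hq1 hq2 (abs_le.1 hu).1
        _ ≤ 2 ^ q * (q / 2 * u ^ 2) :=
            le_mul_of_one_le_left (by positivity) (one_le_rpow one_le_two (by linarith))
  · replace hu : 1 < |u| := not_le.1 hu
    have hγ : gammaQ q u 1 = |u| ^ q - (1 - q / 2) := by simp [gammaQ, hu.not_ge]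
    rw [hγ]
    refine ⟨mul_rpow_sub_le_bregmanAtOne hq1 hq2 hu.le, ?_⟩
    calc bregmanAtOne q u ≤ 2 ^ q * |u| ^ q - 1 := bregmanAtOne_le_of_one_le_abs hq1 hu.le
      _ ≤ 2 ^ q * (|u| ^ q - (1 - q / 2)) := by
        nlinarith [two_rpow_mul_one_sub_half_le_one hq1 hq2]

theorem stmt0 (q f x : ℝ) (hq1 : 1 < q) (hq2 : q ≤ 2) (hf : f ≠ 0) :
    ((q - 1) / (q * 2 ^ q)) * gammaQ q x |f| ≤
      |f + x| ^ q - |f| ^ q - q * Real.sign f * |f| ^ (q - 1) * x ∧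
    |f + x| ^ q - |f| ^ q - q * Real.sign f * |f| ^ (q - 1) * x ≤
      2 ^ q * gammaQ q x |f| := by
  have hf' : 0 < |f| := abs_pos.2 hf
  have hγ : gammaQ q x |f| = |f| ^ q * gammaQ q (x / f) 1 := by
    rw [← gammaQ_abs, ← gammaQ_abs q (x / f), ← gammaQ_mul_mul hf' q _ zero_le_one, mul_one,
      abs_div, mul_div_cancel₀ _ hf'.ne']
  rw [hγ, bregman_eq_abs_rpow_mul_bregmanAtOne hf]
  obtain ⟨hlower, hupper⟩ := bregmanAtOne_bounds hq1.le hq2 (x / f)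
  have hpos : 0 ≤ |f| ^ q := by positivity
  constructor
  · calc _ = |f| ^ q * ((q - 1) / (q * 2 ^ q) * gammaQ q (x / f) 1) := by ring
      _ ≤ _ := mul_le_mul_of_nonneg_left hlower hpos
  · calc _ ≤ |f| ^ q * (2 ^ q * gammaQ q (x / f) 1) := mul_le_mul_of_nonneg_left hupper hpos
      _ = _ := by ring
end

section
/- Let p ≥ 2 be a real number and let f, x ∈ ℝ with f ≠ 0. Then (p/8)·|f|^{p−2}·x² + (1/2^{p+1})·|x|^p ≤ |f + x|^p − |f|^p − p·sign(f)·|f|^{p−1}·x ≤ 2p²·|f|^{p−2}·x² + p^p·|x|^p. -/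
open Real

lemma keyK {s p : ℝ} (hs : 0 ≤ s) (hp : 2 ≤ p) :
    1 + p * s + (p - 1) * s ^ 2 ≤ (1 + s) ^ p := by
  have h1 : (0:ℝ) < 1 + s := by linarith
  have hb : 1 + (p - 1) * s ≤ (1 + s) ^ (p - 1) :=
    one_add_mul_self_le_rpow_one_add (by linarith) (by linarith)
  have he : (1 + s) ^ p = (1 + s) * (1 + s) ^ (p - 1) := by
    rw [show p = 1 + (p - 1) by ring, Real.rpow_add h1, Real.rpow_one]
    ring_nf
  rw [he]
  nlinarith [mul_le_mul_of_nonneg_left hb h1.le]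

lemma sqBern {r p : ℝ} (hr : 0 ≤ r) (h2 : p * r ≤ 2) (hp : 2 ≤ p) :
    (1 - p * r / 2) ^ 2 ≤ (1 - r) ^ p := by
  have hr1 : r ≤ 1 := by nlinarith
  have hb : 1 + (p / 2) * (-r) ≤ (1 + (-r)) ^ (p / 2) :=
    one_add_mul_self_le_rpow_one_add (by linarith) (by linarith)
  have h0 : (0:ℝ) ≤ 1 - p * r / 2 := by linarith
  have hb' : 1 - p * r / 2 ≤ (1 - r) ^ (p / 2) := by
    have : 1 + (p / 2) * (-r) = 1 - p * r / 2 := by ring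
    rw [this] at hb
    rwa [show 1 + -r = 1 - r by ring] at hb
  have he : ((1 - r) ^ (p / 2)) ^ (2:ℕ) = (1 - r) ^ p := by
    rw [← Real.rpow_natCast ((1 - r) ^ (p / 2)) 2, ← Real.rpow_mul (by linarith)]
    norm_num
  calc (1 - p * r / 2) ^ 2 ≤ ((1 - r) ^ (p / 2)) ^ 2 := by
        exact pow_le_pow_left₀ h0 hb' 2
    _ = (1 - r) ^ p := he

lemma expQuad {x : ℝ} (h : |x| ≤ 1) : exp x ≤ 1 + x + x ^ 2 := by
  have hb := Real.exp_bound h (n := 2) (by norm_num)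
  simp [Finset.sum_range_succ] at hb
  have h1 := (abs_sub_le_iff.mp hb).1
  nlinarith [sq_abs x, sq_nonneg x]

lemma rpow_le_sq {x p : ℝ} (h0 : 0 ≤ x) (h1 : x ≤ 1) (hp : 2 ≤ p) : x ^ p ≤ x ^ 2 := by
  rcases eq_or_lt_of_le h0 with h | h
  · rw [← h, Real.zero_rpow (by linarith)]
    positivity
  · have := Real.rpow_le_rpow_of_exponent_ge h h1 hp
    rwa [show ((2:ℝ)) = ((2:ℕ):ℝ) by norm_num, Real.rpow_natCast] at this

lemma sq_le_rpow {x p : ℝ} (h1 : 1 ≤ x) (hp : 2 ≤ p) : x ^ 2 ≤ x ^ p := by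
  have := Real.rpow_le_rpow_of_exponent_le h1 hp
  rwa [show ((2:ℝ)) = ((2:ℕ):ℝ) by norm_num, Real.rpow_natCast] at this

lemma superadd {x y p : ℝ} (hx : 0 ≤ x) (hy : 0 ≤ y) (hp : 1 ≤ p) :
    x ^ p + y ^ p ≤ (x + y) ^ p := by
  lift x to NNReal using hx
  lift y to NNReal using hy
  have := NNReal.add_rpow_le_rpow_add x y hp
  exact_mod_cast this

lemma one_add_rpow_le_exp {t p : ℝ} (hp : 0 ≤ p) (ht : -1 ≤ t) :
    (1 + t) ^ p ≤ exp (p * t) := by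
  have h1 : (0:ℝ) ≤ 1 + t := by linarith
  have h2 : 1 + t ≤ exp t := by linarith [Real.add_one_le_exp t]
  calc (1 + t) ^ p ≤ (exp t) ^ p := Real.rpow_le_rpow h1 h2 hp
    _ = exp (p * t) := by
        rw [Real.rpow_def_of_pos (exp_pos t), Real.log_exp, mul_comm]



lemma lemA {p : ℝ} (hp : 2 ≤ p) (t : ℝ) :
    p / 4 * t ^ 2 ≤ |1 + t| ^ p - 1 - p * t := by
  rcases le_or_gt 0 t with ht | ht
  · rw [abs_of_nonneg (by linarith)]
    nlinarith [keyK ht hp, sq_nonneg t]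
  · rcases le_or_gt (p * (-t)) 2 with h2 | h2
    · have hr1 : -t ≤ 1 := by nlinarith
      rw [abs_of_nonneg (by linarith)]
      have := sqBern (by linarith : (0:ℝ) ≤ -t) h2 hp
      rw [show 1 - -t = 1 + t by ring] at this
      nlinarith [sq_nonneg t, mul_nonneg (mul_nonneg (by linarith : (0:ℝ) ≤ p) (by linarith : (0:ℝ) ≤ p - 1)) (sq_nonneg t)]
    · rcases le_or_gt (-t) 2 with h3 | h3
      · have h0 : (0:ℝ) ≤ |1 + t| ^ p := Real.rpow_nonneg (abs_nonneg _) p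
        nlinarith [h0, sq_nonneg (t + 2)]
      · rw [abs_of_neg (by linarith : 1 + t < 0)]
        have hk := keyK (by linarith : (0:ℝ) ≤ -t - 2) hp
        rw [show 1 + (-t - 2) = -(1 + t) by ring] at hk
        nlinarith [sq_nonneg (t + 2), sq_nonneg t, mul_nonneg (by linarith : (0:ℝ) ≤ p - 2) (sq_nonneg (t+2))]


lemma lemB {p : ℝ} (hp : 2 ≤ p) (t : ℝ) :
    (|t| / 2) ^ p ≤ |1 + t| ^ p - 1 - p * t := by
  rcases le_or_gt 0 t with ht | ht
  · rw [abs_of_nonneg ht, abs_of_nonneg (by linarith)]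
    rcases le_or_gt t 2 with h2 | h2
    -- 0 ≤ t ≤ 2
    · have h1 : (t / 2) ^ p ≤ (t / 2) ^ 2 := rpow_le_sq (by linarith) (by linarith) hp
      nlinarith [keyK ht hp, sq_nonneg t]
    -- t > 2, u = t/2 > 1
    · have hu1 : (1:ℝ) ≤ t / 2 := by linarith
      rcases le_or_gt 3 p with hp3 | hp3
      -- p ≥ 3 route
      · have hsup : (1 + t / 2) ^ p + (t / 2) ^ p ≤ (1 + t) ^ p := by
          have := superadd (by linarith : (0:ℝ) ≤ 1 + t / 2) (by linarith : (0:ℝ) ≤ t / 2)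
            (by linarith : (1:ℝ) ≤ p)
          rwa [show 1 + t / 2 + t / 2 = 1 + t by ring] at this
        -- (1+u)^p ≥ (1+u)^2 * (1+(p-2)u) ≥ 1 + pt
        have hsplit : (1 + t / 2) ^ p = (1 + t / 2) ^ (2:ℕ) * (1 + t / 2) ^ (p - 2) := by
          rw [← Real.rpow_natCast (1 + t/2) 2, ← Real.rpow_add (by linarith : (0:ℝ) < 1 + t/2)]
          norm_num
        have hb : 1 + (p - 2) * (t / 2) ≤ (1 + t / 2) ^ (p - 2) :=
          one_add_mul_self_le_rpow_one_add (by linarith) (by linarith)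
        have h4 : 1 + p * t ≤ (1 + t / 2) ^ p := by
          rw [hsplit]
          have f1 : (0:ℝ) ≤ (2*p-3) * ((t/2)^2 - t/2) :=
            mul_nonneg (by linarith) (by nlinarith)
          have f2 : (0:ℝ) ≤ (p-3) * (t/2) := mul_nonneg (by linarith) (by linarith)
          have f3 : (0:ℝ) ≤ (p-2) * (t/2)^3 := mul_nonneg (by linarith) (by positivity)
          nlinarith [f1, f2, f3, mul_le_mul_of_nonneg_left hb
            (by positivity : (0:ℝ) ≤ (1 + t/2) ^ (2:ℕ))]
        linarith
      · rcases le_or_gt 4 t with h4 | h4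
        -- u ≥ 2 route
        · have hsup : (1 + t / 2) ^ p + (t / 2) ^ p ≤ (1 + t) ^ p := by
            have := superadd (by linarith : (0:ℝ) ≤ 1 + t / 2) (by linarith : (0:ℝ) ≤ t / 2)
              (by linarith : (1:ℝ) ≤ p)
            rwa [show 1 + t / 2 + t / 2 = 1 + t by ring] at this
          have hk := keyK (by linarith : (0:ℝ) ≤ t / 2) hp
          have f1 : (0:ℝ) ≤ (p-1) * ((t/2)^2 - 2*(t/2)) :=
            mul_nonneg (by linarith) (by nlinarith)
          have f2 : (0:ℝ) ≤ (p-2) * (t/2) := mul_nonneg (by linarith) (by linarith)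
          nlinarith [hk, f1, f2]
        -- 2 < t < 4, p < 3
        · have hq : (1 + t) ^ (2:ℕ) ≤ (1 + t) ^ p := sq_le_rpow (by linarith) hp
          -- u^p = u^2 * u^(p-2) ≤ 2 u^2
          have hsplit : (t / 2) ^ p = (t / 2) ^ (2:ℕ) * (t / 2) ^ (p - 2) := by
            rw [← Real.rpow_natCast (t/2) 2, ← Real.rpow_add (by linarith : (0:ℝ) < t/2)]
            norm_num
          have hle2 : (t / 2) ^ (p - 2) ≤ 2 := by
            calc (t / 2) ^ (p - 2) ≤ (2:ℝ) ^ (p - 2) :=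
                  Real.rpow_le_rpow (by linarith) (by linarith) (by linarith)
              _ ≤ (2:ℝ) ^ (1:ℝ) :=
                  Real.rpow_le_rpow_of_exponent_le (by norm_num) (by linarith)
              _ = 2 := Real.rpow_one 2
          have hup : (t / 2) ^ p ≤ 2 * (t / 2) ^ (2:ℕ) := by
            rw [hsplit]
            nlinarith [sq_nonneg (t/2), pow_nonneg (by linarith : (0:ℝ) ≤ t/2) 2]
          nlinarith [hq, hup]
  -- t < 0
  · rw [abs_of_neg ht]
    rcases le_or_gt (p * (-t)) 2 with h2 | h2
    · have hr1 : -t ≤ 1 := by nlinarith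
      rw [abs_of_nonneg (by linarith)]
      have hs := sqBern (by linarith : (0:ℝ) ≤ -t) h2 hp
      rw [show 1 - -t = 1 + t by ring] at hs
      have h1 : (-t / 2) ^ p ≤ (-t / 2) ^ 2 := rpow_le_sq (by linarith) (by linarith) hp
      nlinarith [sq_nonneg t, mul_nonneg (mul_nonneg (by linarith : (0:ℝ) ≤ p)
        (by linarith : (0:ℝ) ≤ p - 1)) (sq_nonneg t)]
    · rcases le_or_gt (-t) 2 with h3 | h3
      · have h0 : (0:ℝ) ≤ |1 + t| ^ p := Real.rpow_nonneg (abs_nonneg _) p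
        have h1 : (-t / 2) ^ p ≤ (-t / 2) ^ 2 := rpow_le_sq (by linarith) (by linarith) hp
        nlinarith [h0]
      · rw [abs_of_neg (by linarith : 1 + t < 0)]
        have h1 : (-t / 2) ^ p ≤ (-(1 + t)) ^ p :=
          Real.rpow_le_rpow (by linarith) (by linarith) (by linarith)
        nlinarith [h1]


lemma lemU {p : ℝ} (hp : 2 ≤ p) (t : ℝ) :
    |1 + t| ^ p - 1 - p * t ≤ 2 * p ^ 2 * t ^ 2 + p ^ p * |t| ^ p := by
  have hp0 : (0:ℝ) < p := by linarith
  have hppt : (0:ℝ) ≤ p ^ p * |t| ^ p :=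
    mul_nonneg (Real.rpow_nonneg hp0.le p) (Real.rpow_nonneg (abs_nonneg t) p)
  rcases le_or_gt 1 t with ht1 | ht1
  -- t ≥ 1
  · rw [abs_of_nonneg (by linarith), abs_of_nonneg (by linarith)]
    have h1 : (1 + t) ^ p ≤ (2 * t) ^ p :=
      Real.rpow_le_rpow (by linarith) (by linarith) hp0.le
    have h2 : ((2:ℝ) * t) ^ p = 2 ^ p * t ^ p := Real.mul_rpow (by norm_num) (by linarith)
    have h3 : (2:ℝ) ^ p ≤ p ^ p := Real.rpow_le_rpow (by norm_num) hp hp0.le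
    have h4 : (0:ℝ) ≤ t ^ p := Real.rpow_nonneg (by linarith) p
    nlinarith [mul_le_mul_of_nonneg_right h3 h4, sq_nonneg t]
  rcases le_or_gt 0 t with ht0 | ht0
  -- 0 ≤ t < 1
  · rw [abs_of_nonneg (by linarith), abs_of_nonneg ht0]
    have hexp : (1 + t) ^ p ≤ exp (p * t) := one_add_rpow_le_exp hp0.le (by linarith)
    rcases le_or_gt (p * t) 1 with hv1 | hv1
    · have hq : exp (p * t) ≤ 1 + p * t + (p * t) ^ 2 := by
        apply expQuad
        rw [abs_of_nonneg (by positivity)]; exact hv1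
      have h4 : (0:ℝ) ≤ t ^ p := Real.rpow_nonneg (by linarith) p
      nlinarith [mul_nonneg (Real.rpow_nonneg hp0.le p) h4, sq_nonneg (p*t)]
    · -- v = p*t ∈ (1, p]
      have hv := hv1.le
      have hvp : p * t ≤ p := by nlinarith
      have hvpr : (p * t) ^ p = p ^ p * t ^ p := Real.mul_rpow hp0.le ht0
      have hv2 : (p * t) ^ (2:ℕ) ≤ (p * t) ^ p := sq_le_rpow (by linarith) hp
      have key : exp (p * t) ≤ 1 + p * t + 2 * (p * t) ^ (2:ℕ) + (p * t) ^ p := by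
        set v := p * t with hvdef
        rcases le_or_gt v 2 with hv2' | hv2'
        · have hw : exp (v - 1) ≤ 1 + (v - 1) + (v - 1) ^ 2 := by
            apply expQuad
            rw [abs_of_nonneg (by linarith)]; linarith
          have he : exp v = exp 1 * exp (v - 1) := by
            rw [← Real.exp_add]; ring_nf
          have he1 : exp 1 < 2.7182818286 := Real.exp_one_lt_d9
          have hepos : (0:ℝ) < exp 1 := Real.exp_pos 1
          have hwpos : (0:ℝ) < exp (v-1) := Real.exp_pos _
          nlinarith [hv2, mul_le_mul he1.le hw hwpos.le (by norm_num), sq_nonneg (v-1)]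
        · rcases le_or_gt v 3 with hv3 | hv3
          · have hw : exp (v - 2) ≤ 1 + (v - 2) + (v - 2) ^ 2 := by
              apply expQuad
              rw [abs_of_nonneg (by linarith)]; linarith
            have he : exp v = exp 1 * exp 1 * exp (v - 2) := by
              rw [← Real.exp_add, ← Real.exp_add]; ring_nf
            have he1 : exp 1 < 2.7182818286 := Real.exp_one_lt_d9
            have hepos : (0:ℝ) < exp 1 := Real.exp_pos 1
            have hwpos : (0:ℝ) < exp (v-2) := Real.exp_pos _
            have hee : exp 1 * exp 1 ≤ 7.39 := by nlinarith
            nlinarith [hv2, mul_le_mul hee hw (by positivity) (by norm_num),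
              sq_nonneg (v-2), mul_nonneg (by linarith : (0:ℝ) ≤ 3 - v) (by linarith : (0:ℝ) ≤ v - 2)]
          · -- v ≥ 3 : exp v ≤ v^p
            have hlog : (1:ℝ) ≤ Real.log v := by
              rw [← Real.log_exp 1]
              apply Real.log_le_log (Real.exp_pos 1)
              exact le_of_lt (lt_of_lt_of_le Real.exp_one_lt_d9 (by linarith))
            have hvv : v ≤ p * Real.log v := by
              calc v = v * 1 := (mul_one v).symm
                _ ≤ p * Real.log v := mul_le_mul hvp hlog zero_le_one hp0.le
            have : exp v ≤ v ^ p := by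
              rw [Real.rpow_def_of_pos (by linarith : (0:ℝ) < v)]
              exact Real.exp_le_exp.mpr (by nlinarith)
            nlinarith [this, sq_nonneg v, pow_nonneg (by linarith : (0:ℝ) ≤ v) 2]
      nlinarith [hexp, key, hvpr]
  rcases le_or_gt (-1) t with htm | htm
  -- -1 ≤ t < 0
  · rw [abs_of_nonneg (by linarith), abs_of_neg ht0]
    have hexp : (1 + t) ^ p ≤ exp (p * t) := one_add_rpow_le_exp hp0.le (by linarith)
    rcases le_or_gt (p * (-t)) 1 with hx1 | hx1
    · have hq : exp (p * t) ≤ 1 + p * t + (p * t) ^ 2 := by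
        apply expQuad
        rw [abs_of_nonpos (by nlinarith)]; linarith
      have h4 : (0:ℝ) ≤ (-t) ^ p := Real.rpow_nonneg (by linarith) p
      nlinarith [mul_nonneg (Real.rpow_nonneg hp0.le p) h4, sq_nonneg (p*t)]
    · have hle1 : exp (p * t) ≤ 1 := by
        rw [Real.exp_le_one_iff]
        nlinarith
      have h4 : (0:ℝ) ≤ (-t) ^ p := Real.rpow_nonneg (by linarith) p
      nlinarith [mul_nonneg (Real.rpow_nonneg hp0.le p) h4, sq_nonneg (p*t), sq_nonneg (p*t+1)]
  -- t < -1
  · rw [abs_of_neg (by linarith : 1 + t < 0), abs_of_neg ht0]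
    have h1 : (-(1 + t)) ^ p ≤ (-t) ^ p :=
      Real.rpow_le_rpow (by linarith) (by linarith) hp0.le
    have h2 : (1:ℝ) ≤ p ^ p := by
      calc (1:ℝ) = 1 ^ p := (Real.one_rpow p).symm
        _ ≤ p ^ p := Real.rpow_le_rpow (by norm_num) (by linarith) hp0.le
    have h4 : (0:ℝ) ≤ (-t) ^ p := Real.rpow_nonneg (by linarith) p
    have f1 : p * (-t) ≤ p * t ^ 2 :=
      mul_le_mul_of_nonneg_left (by nlinarith) hp0.le
    have f2 : p * t ^ 2 ≤ 2 * p ^ 2 * t ^ 2 := by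
      nlinarith [mul_nonneg (by nlinarith : (0:ℝ) ≤ 2 * p ^ 2 - p) (sq_nonneg t)]
    have f3 := mul_le_mul_of_nonneg_right h2 h4
    rw [one_mul] at f3
    linarith [h1, f3, f1, f2]

lemma lemLow {p : ℝ} (hp : 2 ≤ p) (t : ℝ) :
    p / 8 * t ^ 2 + 1 / 2 ^ (p + 1) * |t| ^ p ≤ |1 + t| ^ p - 1 - p * t := by
  have hA := lemA hp t
  have hB := lemB hp t
  have hdiv : (|t| / 2) ^ p = |t| ^ p / 2 ^ p := Real.div_rpow (abs_nonneg t) (by norm_num) p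
  have h2 : (2:ℝ) ^ (p + 1) = 2 ^ p * 2 := Real.rpow_add_one (by norm_num) p
  rw [h2]
  rw [hdiv] at hB
  have hpow : (0:ℝ) < 2 ^ p := Real.rpow_pos_of_pos (by norm_num) p
  have hB' : 1 / (2 ^ p * 2) * |t| ^ p ≤ (1/2) * (|1 + t| ^ p - 1 - p * t) := by
    rw [show 1 / ((2:ℝ) ^ p * 2) * |t| ^ p = (1/2) * (|t| ^ p / 2 ^ p) by
      rw [mul_comm ((2:ℝ)^p) 2, ← div_div]; ring]
    linarith
  linarith

theorem stmt1 (p f x : ℝ) (hp : 2 ≤ p) (hf : f ≠ 0) :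
    (p / 8) * |f| ^ (p - 2) * x ^ 2 + (1 / 2 ^ (p + 1)) * |x| ^ p ≤
      |f + x| ^ p - |f| ^ p - p * Real.sign f * |f| ^ (p - 1) * x ∧
    |f + x| ^ p - |f| ^ p - p * Real.sign f * |f| ^ (p - 1) * x ≤
      2 * p ^ 2 * |f| ^ (p - 2) * x ^ 2 + p ^ p * |x| ^ p := by
  have ha : 0 < |f| := abs_pos.mpr hf
  set t := Real.sign f * x / |f| with htdef
  have hsval : Real.sign f = -1 ∨ Real.sign f = 1 := by
    rcases lt_or_gt_of_ne hf with h | h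
    · exact Or.inl (Real.sign_of_neg h)
    · exact Or.inr (Real.sign_of_pos h)
  have hs2 : Real.sign f * Real.sign f = 1 := by
    rcases hsval with h | h <;> rw [h] <;> norm_num
  have hsabs : |Real.sign f| = 1 := by
    rcases hsval with h | h <;> rw [h] <;> norm_num
  have hsf : Real.sign f * |f| = f := by
    rcases lt_or_gt_of_ne hf with h | h
    · rw [Real.sign_of_neg h, abs_of_neg h]; ring
    · rw [Real.sign_of_pos h, abs_of_pos h]; ring
  have hsx : |f| * t = Real.sign f * x := by
    rw [htdef]; field_simp
  have hxe : x = Real.sign f * (|f| * t) := by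
    rw [hsx, ← mul_assoc, hs2, one_mul]
  have hfx : f + x = Real.sign f * (|f| * (1 + t)) := by
    linear_combination (-1 : ℝ) * hsf + hxe
  have habs1 : |f + x| = |f| * |1 + t| := by
    rw [hfx, abs_mul, abs_mul, hsabs, abs_abs, one_mul]
  have habs2 : |x| = |f| * |t| := by
    rw [hxe, abs_mul, abs_mul, hsabs, abs_abs, one_mul]
  have E1 : |f + x| ^ p = |f| ^ p * |1 + t| ^ p := by
    rw [habs1, Real.mul_rpow ha.le (abs_nonneg _)]
  have E2 : |x| ^ p = |f| ^ p * |t| ^ p := by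
    rw [habs2, Real.mul_rpow ha.le (abs_nonneg _)]
  have hpw1 : |f| ^ (p - 1) * |f| = |f| ^ p := by
    rw [← Real.rpow_add_one (ne_of_gt ha) (p - 1), sub_add_cancel]
  have hpw2 : |f| ^ (p - 2) * |f| ^ (2:ℕ) = |f| ^ p := by
    rw [show |f| ^ (2:ℕ) = |f| ^ ((2:ℕ):ℝ) from (Real.rpow_natCast |f| 2).symm,
      ← Real.rpow_add ha]
    norm_num
  have hx2 : x ^ 2 = |f| ^ 2 * t ^ 2 := by
    rw [hxe]; linear_combination (|f| ^ 2 * t ^ 2) * hs2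
  have E3 : Real.sign f * (|f| ^ (p - 1) * x) = |f| ^ p * t := by
    linear_combination (-(|f| ^ (p - 1))) * hsx + t * hpw1
  have E4 : |f| ^ (p - 2) * x ^ 2 = |f| ^ p * t ^ 2 := by
    linear_combination |f| ^ (p - 2) * hx2 + t ^ 2 * hpw2
  have hL := lemLow hp t
  have hU := lemU hp t
  have hfp : (0:ℝ) ≤ |f| ^ p := Real.rpow_nonneg ha.le p
  have gm : |f + x| ^ p - |f| ^ p - p * Real.sign f * |f| ^ (p - 1) * x
      = |f| ^ p * (|1 + t| ^ p - 1 - p * t) := by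
    linear_combination E1 - p * E3
  constructor
  · have gl : (p / 8) * |f| ^ (p - 2) * x ^ 2 + (1 / 2 ^ (p + 1)) * |x| ^ p
        = |f| ^ p * (p / 8 * t ^ 2 + 1 / 2 ^ (p + 1) * |t| ^ p) := by
      linear_combination (p / 8) * E4 + (1 / 2 ^ (p + 1)) * E2
    rw [gl, gm]
    exact mul_le_mul_of_nonneg_left hL hfp
  · have gu : 2 * p ^ 2 * |f| ^ (p - 2) * x ^ 2 + p ^ p * |x| ^ p
        = |f| ^ p * (2 * p ^ 2 * t ^ 2 + p ^ p * |t| ^ p) := by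
      linear_combination (2 * p ^ 2) * E4 + (p ^ p) * E2
    rw [gm, gu]
    exact mul_le_mul_of_nonneg_left hU hfp
end

section
/- Let 1 < q ≤ 2, f > 0, x ∈ ℝ, and t ≥ 1. Define γ_q(x; f) = (q/2)·f^{q−2}·x² if |x| ≤ f and γ_q(x; f) = |x|^q − (1 − q/2)·f^q otherwise. Then t^q·γ_q(x; f) ≤ γ_q(t·x; f) ≤ t²·γ_q(x; f). -/
lemma key (q s : ℝ) (hq1 : 1 < q) (hq2 : q ≤ 2) (hs : 1 ≤ s) :
    s ^ q ≤ q / 2 * s ^ 2 + (1 - q / 2) := by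
  have hs0 : (0:ℝ) ≤ s := by linarith
  have h := Real.geom_mean_le_arith_mean2_weighted
    (by linarith : (0:ℝ) ≤ q / 2) (by linarith : (0:ℝ) ≤ 1 - q / 2)
    (by positivity : (0:ℝ) ≤ s ^ 2) (zero_le_one) (by ring)
  have e : ((s:ℝ) ^ (2:ℕ)) ^ (q / 2) = s ^ q := by
    rw [← Real.rpow_natCast s 2, ← Real.rpow_mul hs0]
    norm_num
    rw [show (2:ℝ) * (q / 2) = q by ring]
  rw [Real.one_rpow, mul_one, e] at h
  linarith

lemma key2 (q f s : ℝ) (hq1 : 1 < q) (hq2 : q ≤ 2) (hf : 0 < f) (hs : f ≤ s) :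
    s ^ q ≤ q / 2 * (s ^ 2 * f ^ (q - 2)) + (1 - q / 2) * f ^ q := by
  have hs0 : 0 < s := lt_of_lt_of_le hf hs
  have h1 : (1:ℝ) ≤ s / f := (one_le_div hf).mpr hs
  have h := key q (s / f) hq1 hq2 h1
  have hd : (s / f) ^ q = s ^ q / f ^ q := Real.div_rpow hs0.le hf.le q
  have hfq : 0 < f ^ q := Real.rpow_pos_of_pos hf q
  have hf2 : f ^ (q - 2) = f ^ q / f ^ 2 := by
    rw [Real.rpow_sub hf, ← Real.rpow_natCast f 2]; norm_num
  rw [hd, div_pow] at h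
  have hf2' : (0:ℝ) < f ^ 2 := by positivity
  rw [hf2]
  have := mul_le_mul_of_nonneg_right h hfq.le
  calc s ^ q = s ^ q / f ^ q * f ^ q := by field_simp
    _ ≤ (q / 2 * (s ^ 2 / f ^ 2) + (1 - q / 2)) * f ^ q := this
    _ = q / 2 * (s ^ 2 * (f ^ q / f ^ 2)) + (1 - q / 2) * f ^ q := by
        field_simp

theorem stmt2 (q f x t : ℝ) (hq1 : 1 < q) (hq2 : q ≤ 2) (hf : 0 < f) (ht : 1 ≤ t) :
    t ^ q * gammaQ q x f ≤ gammaQ q (t * x) f ∧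
    gammaQ q (t * x) f ≤ t ^ 2 * gammaQ q x f := by
  have ht0 : (0:ℝ) ≤ t := by linarith
  have hq0 : (0:ℝ) < q := by linarith
  have habs : |t * x| = t * |x| := by rw [abs_mul, abs_of_nonneg ht0]
  have hfq : (0:ℝ) < f ^ q := Real.rpow_pos_of_pos hf q
  have hfq2 : (0:ℝ) < f ^ (q - 2) := Real.rpow_pos_of_pos hf _
  have htq1 : (1:ℝ) ≤ t ^ q := Real.one_le_rpow ht hq0.le
  have htq2 : t ^ q ≤ t ^ 2 := by
    rw [← Real.rpow_natCast t 2]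
    exact Real.rpow_le_rpow_of_exponent_le ht (by norm_num [hq2])
  have ha : (0:ℝ) ≤ 1 - q / 2 := by linarith
  have ht2 : (1:ℝ) ≤ t ^ 2 := by nlinarith
  unfold gammaQ
  by_cases h1 : |x| ≤ f
  · by_cases h2 : |t * x| ≤ f
    · rw [if_pos h1, if_pos h2]
      have hC : (0:ℝ) ≤ q / 2 * f ^ (q - 2) * x ^ 2 :=
        mul_nonneg (mul_nonneg (by linarith) hfq2.le) (sq_nonneg x)
      constructor
      · nlinarith [mul_le_mul_of_nonneg_right htq2 hC]
      · nlinarith [hC]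
    · rw [if_pos h1, if_neg h2]
      push_neg at h2
      rw [habs] at h2 ⊢
      have hu : 0 < |x| := by
        by_contra h
        push_neg at h
        have : |x| = 0 := le_antisymm h (abs_nonneg x)
        rw [this, mul_zero] at h2; linarith
      have hmul : (t * |x|) ^ q = t ^ q * |x| ^ q := Real.mul_rpow ht0 (abs_nonneg x)
      have hx2 : x ^ 2 = |x| ^ 2 := (sq_abs x).symm
      constructor
      · -- lower bound
        have hB : f ^ (q - 2) * |x| ^ (2 - q) ≤ 1 := by
          have h1' : (1:ℝ) ≤ f / |x| := (one_le_div hu).mpr h1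
          have hle := Real.rpow_le_one_of_one_le_of_nonpos h1' (by linarith : q - 2 ≤ 0)
          rw [Real.div_rpow hf.le hu.le] at hle
          have hinv : |x| ^ (2 - q) = (|x| ^ (q - 2))⁻¹ := by
            rw [show (2 - q) = -(q - 2) by ring, Real.rpow_neg (abs_nonneg x)]
          rw [hinv, ← div_eq_mul_inv]
          exact hle
        have hB0 : (0:ℝ) ≤ f ^ (q - 2) * |x| ^ (2 - q) := by positivity
        have hsplit : |x| ^ (2:ℕ) = |x| ^ q * |x| ^ (2 - q) := by
          rw [← Real.rpow_natCast |x| 2, ← Real.rpow_add hu]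
          norm_num
        have hfle : f ^ q ≤ t ^ q * |x| ^ q := by
          rw [← hmul]
          exact Real.rpow_le_rpow hf.le h2.le hq0.le
        have hP0 : (0:ℝ) ≤ t ^ q * |x| ^ q := by positivity
        rw [hmul, hx2, hsplit]
        nlinarith [mul_le_mul_of_nonneg_left hB (by positivity : (0:ℝ) ≤ q / 2 * (t ^ q * |x| ^ q)),
          mul_nonneg ha (by linarith : (0:ℝ) ≤ t ^ q * |x| ^ q - f ^ q)]
      · -- upper bound
        have hk := key2 q f (t * |x|) hq1 hq2 hf h2.le
        rw [hx2]
        nlinarith [hk]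
  · have h1' : f < |x| := lt_of_not_ge h1
    have h2 : ¬ |t * x| ≤ f := by
      rw [habs]; push_neg
      calc f < |x| := h1'
        _ ≤ t * |x| := le_mul_of_one_le_left (abs_nonneg x) ht
    rw [if_neg h1, if_neg h2]
    rw [habs]
    have hmul : (t * |x|) ^ q = t ^ q * |x| ^ q := Real.mul_rpow ht0 (abs_nonneg x)
    have hufq : f ^ q ≤ |x| ^ q := Real.rpow_le_rpow hf.le h1'.le hq0.le
    constructor
    · rw [hmul]
      nlinarith [mul_nonneg (mul_nonneg (by linarith : (0:ℝ) ≤ t ^ q - 1) ha) hfq.le]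
    · rw [hmul]
      have hk := key q t hq1 hq2 ht
      nlinarith [mul_nonneg (mul_nonneg ha (by nlinarith : (0:ℝ) ≤ t^2 - 1)) (by linarith : (0:ℝ) ≤ |x|^q - f^q),
        mul_nonneg (by nlinarith : (0:ℝ) ≤ q/2*t^2 + (1-q/2) - t^q) (by positivity : (0:ℝ) ≤ |x|^q)]
end

section
/- Let 1 < q ≤ 2, let d ≥ 1, and let x, y ∈ ℝ^d with all entries of x strictly positive and all entries of y nonnegative. Let G = Σ_{j=1}^d γ_q(y_j; x_j), where γ_q(y; f) = (q/2)f^{q−2}y² if |y| ≤ f and |y|^q − (1 − q/2)f^q otherwise. Then q·Σ_{j=1}^d x_j^{q−1}·y_j ≤ √(2q)·‖x‖_q^{q/2}·√G + q·‖x‖_q^{q−1}·G^{1/q}. -/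
/-!
Termwise, `q x^(q-1) y ≤ √(2q) x^(q/2) √γ + q x^(q-1) γ^(1/q)` with `γ = γ_q(y; x)`.
If `|y| ≤ x`, the first term is exactly `q x^(q-1) |y|`. If `|y| > x`, then `γ ≥ (q/2) x^q`,
so the first term is at least `q x^q`, while `|y|^q ≤ γ + x^q` and the subadditivity of
`t ↦ t^(1/q)` give `|y| ≤ γ^(1/q) + x`. Summing over `j`, the two sums are bounded by
Cauchy–Schwarz and by Hölder with exponents `q/(q-1)` and `q`, both instances of
`∑ fᵃ gᵇ ≤ (∑ f)ᵃ (∑ g)ᵇ` for `a + b = 1`.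
-/

open Real Finset

lemma sum_rpow_mul_rpow_le_of_add_eq_one {ι : Type*} (s : Finset ι) {f g : ι → ℝ} {a b : ℝ}
    (ha : 0 < a) (hb : 0 < b) (hab : a + b = 1) (hf : ∀ i, 0 ≤ f i) (hg : ∀ i, 0 ≤ g i) :
    ∑ i ∈ s, f i ^ a * g i ^ b ≤ (∑ i ∈ s, f i) ^ a * (∑ i ∈ s, g i) ^ b := by
  have := inner_le_Lp_mul_Lq_of_nonneg s (HolderConjugate.inv_inv ha hb hab)
    (fun i _ ↦ rpow_nonneg (hf i) a) (fun i _ ↦ rpow_nonneg (hg i) b)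
  simpa only [rpow_rpow_inv (hf _) ha.ne', rpow_rpow_inv (hg _) hb.ne', one_div, inv_inv] using this

section

variable {ι : Type*} (s : Finset ι) {q : ℝ} {x g : ι → ℝ}

lemma sum_rpow_div_two_mul_sqrt_le (hx : ∀ i, 0 ≤ x i) (hg : ∀ i, 0 ≤ g i) :
    ∑ i ∈ s, x i ^ (q / 2) * √(g i) ≤
      √(∑ i ∈ s, x i ^ q) * √(∑ i ∈ s, g i) := by
  simp only [sqrt_eq_rpow]
  convert sum_rpow_mul_rpow_le_of_add_eq_one s (by norm_num) (by norm_num) (add_halves 1)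
    (fun i ↦ rpow_nonneg (hx i) q) hg using 3 with i
  rw [← rpow_mul (hx i)]
  ring_nf

lemma sum_rpow_sub_one_mul_rpow_one_div_le (hq : 1 < q) (hx : ∀ i, 0 ≤ x i)
    (hg : ∀ i, 0 ≤ g i) :
    ∑ i ∈ s, x i ^ (q - 1) * g i ^ (1 / q) ≤
      (∑ i ∈ s, x i ^ q) ^ ((q - 1) / q) * (∑ i ∈ s, g i) ^ (1 / q) := by
  convert sum_rpow_mul_rpow_le_of_add_eq_one s (a := (q - 1) / q) (b := 1 / q)
    (by bound) (by bound) (by field_simp; ring) (fun i ↦ rpow_nonneg (hx i) q) hg using 3 with i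
  rw [← rpow_mul (hx i)]
  field_simp

end

section

variable {q x y : ℝ}

lemma gammaQ_of_abs_le (h : |y| ≤ x) : gammaQ q y x = q / 2 * x ^ (q - 2) * y ^ 2 := if_pos h

lemma gammaQ_of_lt_abs (h : x < |y|) : gammaQ q y x = |y| ^ q - (1 - q / 2) * x ^ q :=
  if_neg h.not_ge

lemma mul_rpow_le_gammaQ_of_lt_abs (hq : 0 ≤ q) (hx : 0 ≤ x) (h : x < |y|) :
    q / 2 * x ^ q ≤ gammaQ q y x := by
  have : x ^ q ≤ |y| ^ q := rpow_le_rpow hx h.le hq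
  rw [gammaQ_of_lt_abs h]
  linarith

lemma gammaQ_nonneg (hq : 0 ≤ q) (hx : 0 ≤ x) : 0 ≤ gammaQ q y x := by
  rcases le_or_gt |y| x with h | h
  · rw [gammaQ_of_abs_le h]
    positivity
  · exact (by positivity : 0 ≤ q / 2 * x ^ q).trans (mul_rpow_le_gammaQ_of_lt_abs hq hx h)

lemma abs_le_gammaQ_rpow_add_of_lt_abs (hq : 1 ≤ q) (hx : 0 ≤ x) (h : x < |y|) :
    |y| ≤ gammaQ q y x ^ (1 / q) + x := by
  have hq0 : 0 < q := by linarith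
  have hγ : 0 ≤ gammaQ q y x := gammaQ_nonneg hq0.le hx
  have hyq : |y| ^ q ≤ gammaQ q y x + x ^ q := by
    rw [gammaQ_of_lt_abs h]
    nlinarith [rpow_nonneg hx q]
  calc |y| = (|y| ^ q) ^ (1 / q) := by rw [one_div, rpow_rpow_inv (abs_nonneg y) hq0.ne']
    _ ≤ (gammaQ q y x + x ^ q) ^ (1 / q) := by gcongr
    _ ≤ gammaQ q y x ^ (1 / q) + (x ^ q) ^ (1 / q) :=
        rpow_add_le_add_rpow hγ (rpow_nonneg hx q) (by positivity) (by rwa [div_le_one hq0])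
    _ = gammaQ q y x ^ (1 / q) + x := by rw [one_div, rpow_rpow_inv hx hq0.ne']

lemma sq_eq_two_mul_mul_rpow_mul_gammaQ_of_abs_le (hx : 0 < x) (h : |y| ≤ x) :
    (q * x ^ (q - 1) * |y|) ^ 2 = 2 * q * x ^ q * gammaQ q y x := by
  have : (x ^ (q - 1)) ^ 2 = x ^ q * x ^ (q - 2) := by
    rw [← rpow_natCast, ← rpow_mul hx.le, ← rpow_add hx]
    ring_nf
  rw [gammaQ_of_abs_le h, mul_pow, mul_pow, this, sq_abs]
  ring

theorem mul_rpow_sub_one_mul_le_gammaQ (hq : 1 ≤ q) (hx : 0 < x) :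
    q * (x ^ (q - 1) * y) ≤
      √(2 * q) * x ^ (q / 2) * √(gammaQ q y x) + q * x ^ (q - 1) * gammaQ q y x ^ (1 / q) := by
  have hq0 : 0 < q := by linarith
  have hγ : 0 ≤ gammaQ q y x := gammaQ_nonneg hq0.le hx.le
  have hfirst :
      √(2 * q) * x ^ (q / 2) * √(gammaQ q y x) = √(2 * q * x ^ q * gammaQ q y x) := by
    rw [sqrt_mul' _ hγ, sqrt_mul' (2 * q) (rpow_nonneg hx.le q), sqrt_eq_rpow (x ^ q),
      ← rpow_mul hx.le]
    ring_nf
  have habs : q * (x ^ (q - 1) * y) ≤ q * x ^ (q - 1) * |y| := by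
    rw [← mul_assoc]
    exact mul_le_mul_of_nonneg_left (le_abs_self y) (by positivity)
  refine habs.trans ?_
  rw [hfirst]
  rcases le_or_gt |y| x with h | h
  · rw [← sq_eq_two_mul_mul_rpow_mul_gammaQ_of_abs_le hx h, sqrt_sq (by positivity)]
    exact le_add_of_nonneg_right (by positivity)
  · have hxq : q * x ^ q ≤ √(2 * q * x ^ q * gammaQ q y x) := by
      rw [le_sqrt (by positivity) (mul_nonneg (by positivity) hγ)]
      have := mul_le_mul_of_nonneg_left (mul_rpow_le_gammaQ_of_lt_abs hq0.le hx.le h)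
        (by positivity : 0 ≤ 2 * q * x ^ q)
      linarith
    calc q * x ^ (q - 1) * |y| ≤ q * x ^ (q - 1) * (gammaQ q y x ^ (1 / q) + x) := by
          gcongr
          exact abs_le_gammaQ_rpow_add_of_lt_abs hq hx.le h
      _ = q * x ^ (q - 1) * gammaQ q y x ^ (1 / q) + q * x ^ q := by
          rw [mul_add, mul_assoc _ _ x, ← rpow_add_one hx.ne', sub_add_cancel]
      _ ≤ _ := by linarith

end

theorem stmt5_general (q : ℝ) (hq1 : 1 < q) (d : ℕ)
    (x y : Fin d → ℝ) (hx : ∀ j, 0 < x j) :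
    q * ∑ j, x j ^ (q - 1) * y j ≤
      Real.sqrt (2 * q) * ((∑ j, x j ^ q) ^ (1 / q)) ^ (q / 2) *
        Real.sqrt (∑ j, gammaQ q (y j) (x j)) +
      q * ((∑ j, x j ^ q) ^ (1 / q)) ^ (q - 1) *
        (∑ j, gammaQ q (y j) (x j)) ^ (1 / q) := by
  have hq0 : 0 < q := by linarith
  have hγ (j : Fin d) : 0 ≤ gammaQ q (y j) (x j) := gammaQ_nonneg hq0.le (hx j).le
  have hS : 0 ≤ ∑ j, x j ^ q := sum_nonneg fun j _ ↦ rpow_nonneg (hx j).le q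
  calc q * ∑ j, x j ^ (q - 1) * y j = ∑ j, q * (x j ^ (q - 1) * y j) := mul_sum ..
    _ ≤ ∑ j, (√(2 * q) * x j ^ (q / 2) * √(gammaQ q (y j) (x j)) +
          q * x j ^ (q - 1) * gammaQ q (y j) (x j) ^ (1 / q)) :=
        sum_le_sum fun j _ ↦ mul_rpow_sub_one_mul_le_gammaQ hq1.le (hx j)
    _ = √(2 * q) * ∑ j, x j ^ (q / 2) * √(gammaQ q (y j) (x j)) +
          q * ∑ j, x j ^ (q - 1) * gammaQ q (y j) (x j) ^ (1 / q) := by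
        simp only [sum_add_distrib, mul_sum, mul_assoc]
    _ ≤ √(2 * q) * (√(∑ j, x j ^ q) * √(∑ j, gammaQ q (y j) (x j))) +
          q * ((∑ j, x j ^ q) ^ ((q - 1) / q) * (∑ j, gammaQ q (y j) (x j)) ^ (1 / q)) := by
        gcongr
        · exact sum_rpow_div_two_mul_sqrt_le _ (fun j ↦ (hx j).le) hγ
        · exact sum_rpow_sub_one_mul_rpow_one_div_le _ hq1 (fun j ↦ (hx j).le) hγ
    _ = _ := by
        rw [sqrt_eq_rpow (∑ j, x j ^ q), ← rpow_mul hS, ← rpow_mul hS,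
          show 1 / q * (q / 2) = 1 / 2 by field_simp, show 1 / q * (q - 1) = (q - 1) / q by ring]
        ring

theorem stmt5 (q : ℝ) (hq1 : 1 < q) (hq2 : q ≤ 2) (d : ℕ) (hd : 1 ≤ d)
    (x y : Fin d → ℝ) (hx : ∀ j, 0 < x j) (hy : ∀ j, 0 ≤ y j) :
    q * ∑ j, x j ^ (q - 1) * y j ≤
      Real.sqrt (2 * q) * ((∑ j, x j ^ q) ^ (1 / q)) ^ (q / 2) *
        Real.sqrt (∑ j, gammaQ q (y j) (x j)) +
      q * ((∑ j, x j ^ q) ^ (1 / q)) ^ (q - 1) *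
        (∑ j, gammaQ q (y j) (x j)) ^ (1 / q) :=
  stmt5_general q hq1 d x y hx
end

section
/- Let 1 < q ≤ 2 ≤ p and let x, y ∈ ℝ^d with all entries of x strictly positive. Then ‖x + y‖_q^{pq} − ‖x‖_q^{pq} − pq·‖x‖_q^{(p−1)q}·Σ_{j=1}^d x_j^{q−1}·y_j ≤ 200·‖x‖_q^{(p−1)q}·Σ_{j=1}^d γ_q(p·y_j; x_j) + 64^p·(Σ_{j=1}^d γ_q(p·y_j; x_j))^p. -/
open Real Set

lemma mvt_core {r a δ K : ℝ} (hr : 1 ≤ r)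
    (hpos : ∀ t : ℝ, 0 ≤ t → t ≤ 1 → 0 < a + t * δ)
    (hK : ∀ t : ℝ, 0 < t → (a ≤ t ∨ a + δ ≤ t) → (t ≤ a ∨ t ≤ a + δ) →
      r * (r - 1) * t ^ (r - 2) ≤ K) :
    (a + δ) ^ r - a ^ r - r * a ^ (r - 1) * δ ≤ K * δ ^ 2 := by
  have ha : 0 < a := by simpa using hpos 0 le_rfl zero_le_one
  have hK0 : 0 ≤ K := by
    refine le_trans ?_ (hK a ha (Or.inl le_rfl) (Or.inl le_rfl))
    exact mul_nonneg (mul_nonneg (by linarith) (by linarith)) (rpow_nonneg ha.le _)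
  rcases eq_or_ne δ 0 with rfl | hδ
  · simp [hK0]
  have hder : ∀ t : ℝ, HasDerivAt (fun s : ℝ => (a + s * δ) ^ r)
      (δ * r * (a + t * δ) ^ (r - 1)) t := fun t =>
    (((hasDerivAt_mul_const δ).const_add a).rpow_const (p := r) (Or.inr hr))
  obtain ⟨c, hc, hceq⟩ := exists_hasDerivAt_eq_slope (fun s : ℝ => (a + s * δ) ^ r)
    (fun t => δ * r * (a + t * δ) ^ (r - 1)) zero_lt_one
    (fun t _ => (hder t).continuousAt.continuousWithinAt)
    (fun t _ => hder t)
  simp only [one_mul, zero_mul, add_zero, div_one, sub_zero] at hceq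
  have hc0 : 0 < c := hc.1
  have hc1 : c < 1 := hc.2
  have hder2 : ∀ t : ℝ, 0 ≤ t → t ≤ 1 → HasDerivAt (fun s : ℝ => (a + s * δ) ^ (r - 1))
      (δ * (r - 1) * (a + t * δ) ^ (r - 2)) t := by
    intro t ht0 ht1
    have := ((hasDerivAt_mul_const δ).const_add a).rpow_const (p := r - 1)
      (Or.inl (hpos t ht0 ht1).ne')
    convert this using 2
    ring
  obtain ⟨e, he, heeq⟩ := exists_hasDerivAt_eq_slope (fun s : ℝ => (a + s * δ) ^ (r - 1))
    (fun t => δ * (r - 1) * (a + t * δ) ^ (r - 2)) hc0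
    (fun t ht => (hder2 t ht.1 (ht.2.trans hc1.le)).continuousAt.continuousWithinAt)
    (fun t ht => hder2 t ht.1.le (ht.2.trans hc1).le)
  simp only [zero_mul, add_zero, sub_zero] at heeq
  rw [eq_div_iff hc0.ne'] at heeq
  have he1 : 0 < e := he.1
  have he2 : e < 1 := he.2.trans hc1
  have hbe : 0 < a + e * δ := hpos e he1.le he2.le
  have hbound : r * (r - 1) * (a + e * δ) ^ (r - 2) ≤ K := by
    refine hK _ hbe ?_ ?_
    · rcases le_or_gt 0 δ with h | h
      · exact Or.inl (by nlinarith)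
      · exact Or.inr (by nlinarith)
    · rcases le_or_gt 0 δ with h | h
      · exact Or.inr (by nlinarith)
      · exact Or.inl (by nlinarith)
  have h2' : (a + c * δ) ^ (r - 1) = a ^ (r - 1) + δ * (r - 1) * (a + e * δ) ^ (r - 2) * c := by
    linarith [heeq]
  have key : (a + δ) ^ r - a ^ r =
      r * a ^ (r - 1) * δ + (r * (r - 1) * (a + e * δ) ^ (r - 2)) * c * δ ^ 2 := by
    rw [← hceq, h2']
    ring
  have hnn : 0 ≤ r * (r - 1) * (a + e * δ) ^ (r - 2) :=
    mul_nonneg (mul_nonneg (by linarith) (by linarith)) (rpow_nonneg hbe.le _)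
  have hQc : (r * (r - 1) * (a + e * δ) ^ (r - 2)) * c ≤ K := by
    nlinarith
  nlinarith [mul_le_mul_of_nonneg_right hQc (sq_nonneg δ)]

lemma tay_ge2 {p a δ : ℝ} (hp : 2 ≤ p) (ha : 0 < a) (hδ : |δ| ≤ a / p) :
    (a + δ) ^ p ≤ a ^ p + p * a ^ (p - 1) * δ + 3 * p ^ 2 * a ^ (p - 2) * δ ^ 2 := by
  have hp0 : 0 < p := by linarith
  have habs := abs_le.mp hδ
  have hda : |δ| ≤ a / 2 := hδ.trans (by rw [div_le_div_iff₀ hp0 two_pos]; nlinarith)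
  have habs2 := abs_le.mp hda
  have key : (a + δ) ^ p - a ^ p - p * a ^ (p - 1) * δ ≤ (3 * p ^ 2 * a ^ (p - 2)) * δ ^ 2 := by
    apply mvt_core (by linarith) (fun t ht0 ht1 => by nlinarith)
    intro t ht0 _ ht2
    have hap : 0 < a / p := div_pos ha hp0
    have htub : t ≤ a * (1 + 1 / p) := by
      have hexp : a * (1 + 1 / p) = a + a / p := by field_simp
      rcases ht2 with h | h
      · linarith
      · linarith
    have h1 : t ^ (p - 2) ≤ (a * (1 + 1 / p)) ^ (p - 2) :=
      rpow_le_rpow ht0.le htub (by linarith)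
    have h2 : (a * (1 + 1 / p)) ^ (p - 2) = a ^ (p - 2) * (1 + 1 / p) ^ (p - 2) :=
      mul_rpow ha.le (by positivity)
    have h3 : (1 + 1 / p) ^ (p - 2) ≤ 3 := by
      have e1 : (1 : ℝ) + 1 / p ≤ Real.exp (1 / p) := by
        linarith [Real.add_one_le_exp (1 / p)]
      have e2 : (1 + 1 / p) ^ (p - 2) ≤ Real.exp (1 / p) ^ (p - 2) :=
        rpow_le_rpow (by positivity) e1 (by linarith)
      have e3 : Real.exp (1 / p) ^ (p - 2) = Real.exp (1 / p * (p - 2)) := by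
        rw [← Real.exp_mul]
      have e4 : 1 / p * (p - 2) ≤ 1 := by
        rw [div_mul_eq_mul_div, div_le_one hp0]; nlinarith
      have e5 : Real.exp (1 / p * (p - 2)) ≤ Real.exp 1 := Real.exp_le_exp.mpr e4
      have e6 : Real.exp 1 ≤ 3 := by
        have := Real.exp_one_lt_d9
        linarith
      linarith [e2, e3 ▸ e5]
    have ha2 : 0 ≤ a ^ (p - 2) := rpow_nonneg ha.le _
    have h4 : t ^ (p - 2) ≤ 3 * a ^ (p - 2) := by
      rw [h2] at h1
      nlinarith
    have ht3 : 0 ≤ t ^ (p - 2) := rpow_nonneg ht0.le _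
    have h7 : p * (p - 1) * t ^ (p - 2) ≤ p * (p - 1) * (3 * a ^ (p - 2)) :=
      mul_le_mul_of_nonneg_left h4 (by nlinarith)
    nlinarith [mul_nonneg (by linarith : (0:ℝ) ≤ p) ha2]
  linarith

lemma tay_q {q a δ : ℝ} (hq1 : 1 < q) (hq2 : q ≤ 2) (ha : 0 < a) (hδ : -(a / 2) ≤ δ) :
    (a + δ) ^ q ≤ a ^ q + q * a ^ (q - 1) * δ + 2 * q * a ^ (q - 2) * δ ^ 2 := by
  have key : (a + δ) ^ q - a ^ q - q * a ^ (q - 1) * δ ≤ (2 * q * a ^ (q - 2)) * δ ^ 2 := by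
    apply mvt_core (by linarith) (fun t ht0 ht1 => by nlinarith)
    intro t ht0 ht1 _
    have htlb : a / 2 ≤ t := by
      rcases ht1 with h | h <;> linarith
    have h1 : t ^ (q - 2) ≤ (a / 2) ^ (q - 2) :=
      rpow_le_rpow_of_nonpos (by linarith) htlb (by linarith)
    have h2 : (a / 2) ^ (q - 2) = a ^ (q - 2) / (2 : ℝ) ^ (q - 2) :=
      div_rpow ha.le (by norm_num) _
    have h3 : (2 : ℝ) ^ (2 - q) * (2 : ℝ) ^ (q - 2) = 1 := by
      rw [← Real.rpow_add two_pos]; norm_num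
    have h4 : (2 : ℝ) ^ (2 - q) ≤ (2 : ℝ) ^ (1 : ℝ) :=
      rpow_le_rpow_of_exponent_le one_le_two (by linarith)
    have h5 : ((2 : ℝ) ^ (1 : ℝ)) = 2 := rpow_one 2
    have hv : (0:ℝ) < (2 : ℝ) ^ (q - 2) := rpow_pos_of_pos two_pos _
    have ha2 : 0 ≤ a ^ (q - 2) := rpow_nonneg ha.le _
    have hdivmul : a ^ (q - 2) / (2 : ℝ) ^ (q - 2) = a ^ (q - 2) * (2 : ℝ) ^ (2 - q) := by
      rw [div_eq_iff hv.ne', mul_assoc, h3, mul_one]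
    have h6 : t ^ (q - 2) ≤ 2 * a ^ (q - 2) := by
      rw [h2, hdivmul] at h1
      nlinarith [h1, h4, h5, mul_le_mul_of_nonneg_left (h5 ▸ h4) ha2]
    have ht3 : 0 ≤ t ^ (q - 2) := rpow_nonneg ht0.le _
    have h7 : q * (q - 1) * t ^ (q - 2) ≤ q * (q - 1) * (2 * a ^ (q - 2)) :=
      mul_le_mul_of_nonneg_left h6 (by nlinarith)
    nlinarith [mul_nonneg (by linarith : (0:ℝ) ≤ q) ha2]
  linarith
open Real Set

lemma gamma_nonneg {q f : ℝ} (hq1 : 1 < q) (hq2 : q ≤ 2) (hf : 0 < f) (z : ℝ) :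
    0 ≤ gammaQ q z f := by
  unfold gammaQ
  split_ifs with h
  · have := rpow_nonneg hf.le (q - 2)
    have h2 : (0:ℝ) ≤ q / 2 := by linarith
    exact mul_nonneg (mul_nonneg h2 this) (sq_nonneg z)
  · push_neg at h
    have h1 : f ^ q ≤ |z| ^ q := rpow_le_rpow hf.le h.le (by linarith)
    have h2 : 0 ≤ f ^ q := rpow_nonneg hf.le _
    nlinarith

lemma gamma_scale {q f c z : ℝ} (hq1 : 1 < q) (hq2 : q ≤ 2) (hf : 0 < f) (hc : 1 ≤ c) :
    c * gammaQ q z f ≤ gammaQ q (c * z) f := by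
  have hc0 : 0 < c := by linarith
  have habs : |c * z| = c * |z| := by rw [abs_mul, abs_of_pos hc0]
  have hz0 : 0 ≤ |z| := abs_nonneg z
  have hu : 0 ≤ f ^ (q - 2) := rpow_nonneg hf.le _
  unfold gammaQ
  split_ifs with h1 h2 h2
  · -- |z| ≤ f, |cz| ≤ f
    nlinarith [mul_nonneg (mul_nonneg (mul_nonneg hc0.le (sub_nonneg.mpr hc)) hu)
      (sq_nonneg z), mul_nonneg (mul_nonneg (mul_nonneg (mul_nonneg hc0.le
      (sub_nonneg.mpr hc)) hu) (sq_nonneg z)) (by linarith : (0:ℝ) ≤ q)]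
  · -- |z| ≤ f, |cz| > f
    push_neg at h2
    rw [habs] at h2
    have hcz0 : 0 < c * |z| := lt_trans hf h2
    have hz0' : 0 < |z| := by nlinarith
    -- (c|z|)^q = (c|z|)^(q-1) * (c|z|) ≥ f^(q-1) * (c |z|)
    have e1 : |c * z| ^ q = (c * |z|) ^ (q - 1) * (c * |z|) := by
      rw [habs, ← Real.rpow_add_one hcz0.ne']
      ring_nf
    have e2 : f ^ (q - 1) ≤ (c * |z|) ^ (q - 1) :=
      rpow_le_rpow hf.le (by linarith) (by linarith)
    have e3 : f ^ (q - 1) = f ^ (q - 2) * f := by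
      rw [← Real.rpow_add_one hf.ne']
      ring_nf
    have e4 : f ^ q = f ^ (q - 2) * f ^ 2 := by
      rw [← Real.rpow_natCast f 2, ← Real.rpow_add hf]
      norm_num
    have e5 : f ^ (q - 2) * f * (c * |z|) ≤ (c * |z|) ^ (q - 1) * (c * |z|) := by
      apply mul_le_mul_of_nonneg_right _ (by positivity)
      rw [← e3]; exact e2
    rw [e1, e4]
    have key : c * (q / 2 * (f ^ (q - 2)) * z ^ 2) ≤
        f ^ (q - 2) * f * (c * |z|) - (1 - q / 2) * (f ^ (q - 2) * f ^ 2) := by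
      have hzz : z ^ 2 = |z| ^ 2 := (sq_abs z).symm
      rw [hzz]
      nlinarith [mul_nonneg (mul_nonneg hu (sub_nonneg.mpr h2.le))
          (show (0:ℝ) ≤ f - q / 2 * |z| by nlinarith),
        mul_nonneg (mul_nonneg (mul_nonneg hu (by linarith : (0:ℝ) ≤ q)) hf.le)
          (show (0:ℝ) ≤ f - |z| by linarith)]
    linarith [key, e5]
  · -- |z| > f but |cz| ≤ f : impossible
    exfalso
    rw [habs] at h2
    push_neg at h1
    nlinarith
  · -- both big
    push_neg at h1
    rw [habs]
    have hz0' : 0 < |z| := lt_trans hf h1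
    have e1 : (c * |z|) ^ q = c ^ q * |z| ^ q := mul_rpow hc0.le hz0
    have hcq : c ^ (1:ℝ) ≤ c ^ q := rpow_le_rpow_of_exponent_le hc (by linarith)
    rw [rpow_one] at hcq
    have hfq : 0 ≤ f ^ q := rpow_nonneg hf.le _
    have hzq : 0 ≤ |z| ^ q := rpow_nonneg hz0 _
    rw [e1]
    nlinarith [mul_nonneg (sub_nonneg.mpr hcq) hzq,
      mul_nonneg (sub_nonneg.mpr hc) hfq,
      mul_nonneg (mul_nonneg (sub_nonneg.mpr hc) hfq) (by linarith : (0:ℝ) ≤ q)]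

lemma breg_lower {q f : ℝ} (hq1 : 1 < q) (hf : 0 < f) (w : ℝ) :
    f ^ q + q * f ^ (q - 1) * w ≤ |f + w| ^ q := by
  have hq0 : (0:ℝ) < q := by linarith
  have hfq : 0 < f ^ q := rpow_pos_of_pos hf _
  have hfq1 : 0 < f ^ (q - 1) := rpow_pos_of_pos hf _
  have e3 : f ^ (q - 1) * f = f ^ q := by
    rw [← Real.rpow_add_one hf.ne']; ring_nf
  rcases le_or_gt 0 (f + w) with h | h
  · have hs : -1 ≤ w / f := by
      rw [le_div_iff₀ hf] at *
      · linarith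
    have hb : 1 + q * (w / f) ≤ (1 + w / f) ^ q :=
      one_add_mul_self_le_rpow_one_add hs (by linarith)
    have he : f + w = f * (1 + w / f) := by field_simp
    have habs : |f + w| = f + w := abs_of_nonneg h
    rw [habs, he, mul_rpow hf.le (show (0:ℝ) ≤ 1 + w / f by
      rw [← div_self hf.ne', ← add_div]; exact div_nonneg h hf.le)]
    have : f ^ q * (1 + q * (w / f)) ≤ f ^ q * (1 + w / f) ^ q :=
      mul_le_mul_of_nonneg_left hb hfq.le
    have hexp : f ^ q * (1 + q * (w / f)) = f ^ q + q * f ^ (q - 1) * w := by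
      field_simp
      linear_combination (-(q * w)) * e3
    linarith [hexp ▸ this]
  · have hrhs : 0 ≤ |f + w| ^ q := rpow_nonneg (abs_nonneg _) _
    have hw : w < -f := by linarith
    have : q * f ^ (q - 1) * w ≤ q * f ^ (q - 1) * (-f) := by
      apply mul_le_mul_of_nonneg_left hw.le
      positivity
    have this2 : q * f ^ (q - 1) * (-f) = -(q * f ^ q) := by rw [← e3]; ring
    nlinarith [this2, hrhs, hfq]

lemma breg_upper {q f : ℝ} (hq1 : 1 < q) (hq2 : q ≤ 2) (hf : 0 < f) (w : ℝ) :
    |f + w| ^ q - f ^ q - q * f ^ (q - 1) * w ≤ 6 * gammaQ q w f := by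
  have hq0 : (0:ℝ) < q := by linarith
  have hu : 0 ≤ f ^ (q - 2) := rpow_nonneg hf.le _
  have hfq : 0 < f ^ q := rpow_pos_of_pos hf _
  have e3 : f ^ (q - 1) = f ^ (q - 2) * f := by
    rw [← Real.rpow_add_one hf.ne']; ring_nf
  have e4 : f ^ q = f ^ (q - 2) * f ^ 2 := by
    rw [← Real.rpow_natCast f 2, ← Real.rpow_add hf]; norm_num
  unfold gammaQ
  split_ifs with h
  · -- |w| ≤ f
    have habs := abs_le.mp h
    rcases le_or_gt (-(f / 2)) w with h1 | h1
    · -- Taylor region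
      have habs2 : |f + w| = f + w := abs_of_nonneg (by linarith)
      rw [habs2]
      have := tay_q hq1 hq2 hf h1
      have hgq : 0 ≤ q / 2 * f ^ (q - 2) * w ^ 2 := by positivity
      nlinarith [this]
    · -- w ∈ [-f, -f/2)
      have habs2 : |f + w| = f + w := abs_of_nonneg (by linarith)
      rw [habs2]
      have hle : (f + w) ^ q ≤ f ^ q := rpow_le_rpow (by linarith) (by linarith) hq0.le
      -- q f^{q-1} (-w) ≤ 2 q f^{q-2} w^2  since f ≤ 2(-w)
      have key : q * f ^ (q - 1) * (-w) ≤ 2 * q * f ^ (q - 2) * w ^ 2 := by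
        rw [e3]
        nlinarith [mul_nonneg (mul_nonneg hq0.le hu) (sq_nonneg (f + 2 * w))]
      nlinarith [hle, key, mul_nonneg (mul_nonneg hq0.le hu) (sq_nonneg w)]
  · -- |w| > f
    push_neg at h
    have hwq : 0 ≤ |w| ^ q := rpow_nonneg (abs_nonneg _) _
    have hfwq : f ^ q ≤ |w| ^ q := rpow_le_rpow hf.le h.le hq0.le
    rcases le_or_gt 0 w with hw | hw
    · -- w > f > 0
      have habsw : |w| = w := abs_of_nonneg hw
      rw [habsw] at h hfwq ⊢
      have hwpos : 0 < w := hf.trans h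
      have habs2 : |f + w| = f + w := abs_of_nonneg (by linarith)
      rw [habs2]
      have h2w : f + w ≤ 2 * w := by linarith
      have hle : (f + w) ^ q ≤ (2 * w) ^ q := rpow_le_rpow (by linarith) h2w hq0.le
      have e2w : (2 * w) ^ q = (2:ℝ) ^ q * w ^ q := mul_rpow (by norm_num) hwpos.le
      have h2q : (2:ℝ) ^ q ≤ 4 := by
        have : (2:ℝ) ^ q ≤ (2:ℝ) ^ (2:ℝ) := rpow_le_rpow_of_exponent_le one_le_two hq2
        have h4 : (2:ℝ) ^ (2:ℝ) = 4 := by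
          rw [Real.rpow_two]; norm_num
        linarith
      have hlin : 0 ≤ q * f ^ (q - 1) * w := by positivity
      -- goal: (f+w)^q - f^q - q f^{q-1} w ≤ 6 (w^q - (1-q/2) f^q)
      -- LHS ≤ 4 w^q - f^q;  need (5 - 3q) f^q ≤ 2 w^q
      have hwq0 : 0 ≤ w ^ q := rpow_nonneg hwpos.le _
      nlinarith [hle, e2w, h2q, hlin, hfq.le, mul_le_mul_of_nonneg_right h2q hwq0,
        sub_nonneg.mpr hfwq, mul_nonneg (by linarith : (0:ℝ) ≤ q - 1) hfq.le]
    · -- w < -f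
      have habsw : |w| = -w := abs_of_neg hw
      have hwf : w < -f := by rw [habsw] at h; linarith
      have habs2 : |f + w| = -(f + w) := abs_of_neg (by linarith)
      rw [habs2, habsw]
      have hfwq' : f ^ q ≤ (-w) ^ q := by rwa [habsw] at hfwq
      have hle : (-(f + w)) ^ q ≤ (-w) ^ q := rpow_le_rpow (by linarith) (by linarith) hq0.le
      -- q f^{q-1}(-w) ≤ q (-w)^{q-1} (-w) = q (-w)^q
      have hwpos : 0 < -w := by linarith
      have e5 : (-w) ^ (q - 1) * (-w) = (-w) ^ q := by
        rw [← Real.rpow_add_one hwpos.ne']; ring_nf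
      have e6 : f ^ (q - 1) ≤ (-w) ^ (q - 1) := rpow_le_rpow hf.le (by linarith) (by linarith)
      have e7 : q * f ^ (q - 1) * (-w) ≤ q * (-w) ^ q := by
        rw [← e5]
        have := mul_le_mul_of_nonneg_right e6 hwpos.le
        nlinarith
      nlinarith [hle, e7, hfq.le,
        mul_nonneg (sub_nonneg.mpr hfwq') (by linarith : (0:ℝ) ≤ 5 - q),
        mul_nonneg hq0.le hfq.le]

lemma lin_A {q f p y : ℝ} (hq1 : 1 < q) (hq2 : q ≤ 2) (hf : 0 < f) (hp : 2 ≤ p)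
    (hA : |p * y| ≤ f) :
    q * f ^ (q - 1) * |y| ≤ f ^ q / (2 * p) + 2 / p * gammaQ q (p * y) f := by
  have hp0 : (0:ℝ) < p := by linarith
  have hu : 0 ≤ f ^ (q - 2) := rpow_nonneg hf.le _
  have e3 : f ^ (q - 1) = f ^ (q - 2) * f := by
    rw [← Real.rpow_add_one hf.ne']; ring_nf
  have e4 : f ^ q = f ^ (q - 2) * f ^ 2 := by
    rw [← Real.rpow_natCast f 2, ← Real.rpow_add hf]; norm_num
  have hq0 : (0:ℝ) < q := by linarith
  rw [gammaQ, if_pos hA, ← sub_nonneg]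
  have hyy : (p * y) ^ 2 = p ^ 2 * |y| ^ 2 := by rw [mul_pow, sq_abs]
  have key : f ^ q / (2 * p) + 2 / p * (q / 2 * f ^ (q - 2) * (p * y) ^ 2)
      - q * f ^ (q - 1) * |y| =
      (f ^ (q - 2) / p) * (f ^ 2 / 2 + q * p ^ 2 * |y| ^ 2 - q * p * (f * |y|)) := by
    rw [e3, e4, hyy]
    field_simp
  rw [key]
  apply mul_nonneg (by positivity)
  nlinarith [sq_nonneg (f - q * p * |y|), abs_nonneg y,
    mul_nonneg (mul_nonneg (mul_nonneg (by linarith : (0:ℝ) ≤ 2 - q) hq0.le)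
      (sq_nonneg p)) (sq_nonneg |y|)]

lemma lin_B {q f p y : ℝ} (hq1 : 1 < q) (hq2 : q ≤ 2) (hf : 0 < f) (hp : 2 ≤ p)
    (hB : ¬ |p * y| ≤ f) :
    q * f ^ (q - 1) * |y| ≤ 2 / p * gammaQ q (p * y) f := by
  have hp0 : (0:ℝ) < p := by linarith
  have hq0 : (0:ℝ) < q := by linarith
  push_neg at hB
  rw [gammaQ, if_neg (not_le.mpr hB)]
  have hpy : 0 < |p * y| := hf.trans hB
  have habs : |p * y| = p * |y| := by rw [abs_mul, abs_of_pos hp0]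
  have hfq : 0 < f ^ q := rpow_pos_of_pos hf _
  have hfwq : f ^ q ≤ |p * y| ^ q := rpow_le_rpow hf.le hB.le hq0.le
  have e5 : |p * y| ^ (q - 1) * |p * y| = |p * y| ^ q := by
    rw [← Real.rpow_add_one hpy.ne']; ring_nf
  have e6 : f ^ (q - 1) ≤ |p * y| ^ (q - 1) := rpow_le_rpow hf.le hB.le (by linarith)
  -- q f^{q-1} |y| = (q/p) f^{q-1} |p y| ≤ (q/p) |p y|^q ≤ (2/p) γ
  have step1 : q * f ^ (q - 1) * (p * |y|) ≤ q * |p * y| ^ q := by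
    rw [← e5]
    have h1 := mul_le_mul_of_nonneg_right e6 (abs_nonneg (p * y))
    have h2 : f ^ (q - 1) * (p * |y|) = f ^ (q - 1) * |p * y| := by rw [habs]
    nlinarith [h1, h2]
  -- γ ≥ (q/2) |p y|^q
  have step2 : q / 2 * |p * y| ^ q ≤ |p * y| ^ q - (1 - q / 2) * f ^ q := by
    nlinarith [sub_nonneg.mpr hfwq]
  rw [← sub_nonneg]
  have expand : 2 / p * (|p * y| ^ q - (1 - q / 2) * f ^ q) - q * f ^ (q - 1) * |y| =
      (1 / p) * ((2 * (|p * y| ^ q - (1 - q / 2) * f ^ q) - q * |p * y| ^ q)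
        + (q * |p * y| ^ q - q * f ^ (q - 1) * (p * |y|))) := by
    field_simp
    ring
  rw [expand]
  apply mul_nonneg (by positivity)
  have h1 : 0 ≤ 2 * (|p * y| ^ q - (1 - q / 2) * f ^ q) - q * |p * y| ^ q := by linarith [step2]
  linarith [step1, h1]

set_option maxHeartbeats 1000000 in
lemma main_arith {p N S T D : ℝ} (hp : 2 ≤ p) (hN : 0 ≤ N) (hS : 0 ≤ S)
    (hM : 0 ≤ N + T + D) (hD0 : 0 ≤ D) (hD : D ≤ 6 / p * S)
    (hT : |T| ≤ N / (2 * p) + 2 / p * S)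
    (hT2' : p ^ 2 * T ^ 2 ≤ 8 * N * S + 8 * S ^ 2) :
    (N + T + D) ^ p ≤ N ^ p + p * N ^ (p - 1) * T + 200 * N ^ (p - 1) * S
      + 64 ^ p * S ^ p := by
  have hp0 : (0:ℝ) < p := by linarith
  have habsT := abs_le.mp hT
  have hSp : (0:ℝ) ≤ S ^ p := rpow_nonneg hS _
  have hNp1 : (0:ℝ) ≤ N ^ (p - 1) := rpow_nonneg hN _
  have hNp : (0:ℝ) ≤ N ^ p := rpow_nonneg hN _
  have hNS : (0:ℝ) ≤ N ^ (p - 1) * S := mul_nonneg hNp1 hS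
  rcases le_or_gt N (16 * S) with hc | hc
  · -- Case 1 : N ≤ 16 S
    have hdiv1 : N / (2 * p) ≤ N / 4 :=
      div_le_div_of_nonneg_left hN (by norm_num) (by linarith)
    have hdiv2 : 2 / p * S ≤ S := by
      have h1 : 2 / p ≤ 1 := by rw [div_le_one hp0]; linarith
      nlinarith
    have hdiv3 : 6 / p * S ≤ 3 * S := by
      have h1 : 6 / p ≤ 3 := by rw [div_le_iff₀ hp0]; linarith
      nlinarith
    have hM24 : N + T + D ≤ 24 * S := by nlinarith [habsT.2]
    have hMp : (N + T + D) ^ p ≤ (24 * S) ^ p := rpow_le_rpow hM hM24 hp0.le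
    have h24 : (24 * S) ^ p = (24:ℝ) ^ p * S ^ p := mul_rpow (by norm_num) hS
    have h2464 : 2 * (24:ℝ) ^ p ≤ 64 ^ p := by
      have e1 : (64:ℝ) ^ p = (24:ℝ) ^ p * (8/3 : ℝ) ^ p := by
        rw [← mul_rpow (by norm_num) (by norm_num)]; norm_num
      have e2 : (2:ℝ) ≤ (8/3 : ℝ) ^ p := by
        have h1 : ((8:ℝ)/3) ^ (2:ℝ) ≤ (8/3 : ℝ) ^ p :=
          rpow_le_rpow_of_exponent_le (by norm_num) hp
        have h2 : ((8:ℝ)/3) ^ (2:ℝ) = 64/9 := by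
          rw [Real.rpow_two]; norm_num
        linarith
      nlinarith [rpow_nonneg (by norm_num : (0:ℝ) ≤ 24) p]
    rcases eq_or_lt_of_le hN with hN0 | hN0
    · -- N = 0
      have hz1 : N ^ p = 0 := by rw [← hN0]; exact zero_rpow hp0.ne'
      have hz2 : N ^ (p - 1) = 0 := by
        rw [← hN0]; exact zero_rpow (by intro h; linarith [h] : p - 1 ≠ 0)
      have h2464' : (24:ℝ) ^ p * S ^ p ≤ 64 ^ p * S ^ p := by
        nlinarith [rpow_nonneg (by norm_num : (0:ℝ) ≤ 24) p]
      rw [hz1, hz2]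
      rw [h24] at hMp
      linarith
    · -- N > 0
      have hS0 : 0 < S := by linarith
      have hNpe : N ^ (p - 1) * N = N ^ p := by
        rw [← Real.rpow_add_one hN0.ne' (p - 1)]; congr 1; ring
      have hSpe : S ^ (p - 1) * S = S ^ p := by
        rw [← Real.rpow_add_one hS0.ne' (p - 1)]; congr 1; ring
      have h16pe : (16:ℝ) ^ (p - 1) * 16 = 16 ^ p := by
        rw [← Real.rpow_add_one (by norm_num : (16:ℝ) ≠ 0) (p - 1)]; congr 1; ring
      have hNp1le : N ^ (p - 1) ≤ (16:ℝ) ^ (p - 1) * S ^ (p - 1) := by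
        rw [← mul_rpow (by norm_num) hS]
        exact rpow_le_rpow hN hc (by linarith)
      have hNple : N ^ p ≤ (16:ℝ) ^ p * S ^ p := by
        rw [← mul_rpow (by norm_num) hS]
        exact rpow_le_rpow hN hc hp0.le
      -- -(p N^{p-1} T) ≤ N^p/2 + 2 N^{p-1} S
      have hmulT : p * (N / (2 * p) + 2 / p * S) = N / 2 + 2 * S := by
        field_simp
      have hTlow : -(p * N ^ (p - 1) * T) ≤ N ^ (p - 1) * (N / 2 + 2 * S) := by
        have h1 : -T ≤ N / (2 * p) + 2 / p * S := by linarith [habsT.1]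
        have h2 : p * N ^ (p - 1) * (-T) ≤ p * N ^ (p - 1) * (N / (2 * p) + 2 / p * S) :=
          mul_le_mul_of_nonneg_left h1 (by positivity)
        calc -(p * N ^ (p - 1) * T) = p * N ^ (p - 1) * (-T) := by ring
          _ ≤ p * N ^ (p - 1) * (N / (2 * p) + 2 / p * S) := h2
          _ = N ^ (p - 1) * (p * (N / (2 * p) + 2 / p * S)) := by ring
          _ = N ^ (p - 1) * (N / 2 + 2 * S) := by rw [hmulT]
      -- N^{p-1} (N/2 + 2S) ≤ (1/2) 16^p S^p + (1/8) 16^p S^p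
      have hbd : N ^ (p - 1) * (N / 2 + 2 * S) ≤ (5/8) * (16:ℝ) ^ p * S ^ p := by
        have h1 : N ^ (p - 1) * N ≤ (16:ℝ) ^ p * S ^ p := by rw [hNpe]; exact hNple
        have h2 : N ^ (p - 1) * S ≤ ((16:ℝ) ^ (p - 1) * S ^ (p - 1)) * S :=
          mul_le_mul_of_nonneg_right hNp1le hS
        have h3 : ((16:ℝ) ^ (p - 1) * S ^ (p - 1)) * S = (1/16) * (16:ℝ) ^ p * S ^ p := by
          rw [← hSpe, ← h16pe]; ring
        linarith [h2, h3]
      have h1624 : (16:ℝ) ^ p * S ^ p ≤ (24:ℝ) ^ p * S ^ p :=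
        mul_le_mul_of_nonneg_right
          (rpow_le_rpow (by norm_num) (by norm_num) hp0.le) hSp
      have hfin : 2 * ((24:ℝ) ^ p * S ^ p) ≤ 64 ^ p * S ^ p := by
        have := mul_le_mul_of_nonneg_right h2464 hSp
        linarith [this]
      rw [h24] at hMp
      linarith [hMp, hTlow, hbd, h1624, hfin, hNp, hNS]
  · -- Case 2 : 16 S < N
    have hN0 : 0 < N := by linarith
    have hS16 : S ≤ N / 16 := by linarith
    have hfrac : (0:ℝ) ≤ 2 / p := by positivity
    have he1 : 2 / p * S ≤ 2 / p * (N / 16) := mul_le_mul_of_nonneg_left hS16 hfrac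
    have he2 : 6 / p * S ≤ 6 / p * (N / 16) := by
      apply mul_le_mul_of_nonneg_left hS16 (by positivity)
    have hsum : N / (2 * p) + 2 / p * (N / 16) + 6 / p * (N / 16) = N / p := by
      field_simp; ring
    have hΔ : |T + D| ≤ N / p := by
      rw [abs_le]
      constructor
      · have := habsT.1
        have hDp : 0 ≤ 6 / p * (N / 16) := by positivity
        nlinarith [he1]
      · nlinarith [habsT.2, he1, he2]
    have htay := tay_ge2 hp hN0 hΔ
    have hNtd : N + T + D = N + (T + D) := by ring
    rw [hNtd]
    -- suffices: p N^{p-1} D + 3 p^2 N^{p-2} Δ^2 ≤ 200 N^{p-1} S + 64^p S^p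
    have hNp2 : (0:ℝ) ≤ N ^ (p - 2) := rpow_nonneg hN _
    have hN2e : N ^ (p - 2) * N = N ^ (p - 1) := by
      rw [← Real.rpow_add_one hN0.ne' (p - 2)]; congr 1; ring
    have hDterm : p * N ^ (p - 1) * D ≤ 6 * (N ^ (p - 1) * S) := by
      have h1 : p * D ≤ 6 * S := by
        have : p * (6 / p * S) = 6 * S := by field_simp
        nlinarith [mul_le_mul_of_nonneg_left hD hp0.le]
      calc p * N ^ (p - 1) * D = N ^ (p - 1) * (p * D) := by ring
        _ ≤ N ^ (p - 1) * (6 * S) := mul_le_mul_of_nonneg_left h1 hNp1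
        _ = 6 * (N ^ (p - 1) * S) := by ring
    have hp2 : (0:ℝ) < p ^ 2 := by positivity
    have hD2' : p ^ 2 * D ^ 2 ≤ 36 * S ^ 2 := by
      have h0 : p * D ≤ 6 * S := by
        have h1 : p * (6 / p * S) = 6 * S := by field_simp
        nlinarith [mul_le_mul_of_nonneg_left hD hp0.le]
      have hpd : 0 ≤ p * D := mul_nonneg hp0.le hD0
      nlinarith [h0, hpd]
    have hΔ2' : p ^ 2 * (T + D) ^ 2 ≤ 16 * N * S + 88 * S ^ 2 := by
      have hexp : p ^ 2 * (T + D) ^ 2 =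
          2 * (p ^ 2 * T ^ 2) + 2 * (p ^ 2 * D ^ 2) - p ^ 2 * (T - D) ^ 2 := by ring
      have hnn : (0:ℝ) ≤ p ^ 2 * (T - D) ^ 2 := by positivity
      linarith
    have hquad : 3 * p ^ 2 * N ^ (p - 2) * (T + D) ^ 2 ≤
        48 * (N ^ (p - 1) * S) + 264 * (N ^ (p - 2) * S ^ 2) := by
      have hcoef : (0:ℝ) ≤ 3 * N ^ (p - 2) := by positivity
      have h1 := mul_le_mul_of_nonneg_left hΔ2' hcoef
      have h2 : 3 * N ^ (p - 2) * (16 * N * S + 88 * S ^ 2) =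
          48 * (N ^ (p - 2) * N * S) + 264 * (N ^ (p - 2) * S ^ 2) := by ring
      have h3 : 3 * p ^ 2 * N ^ (p - 2) * (T + D) ^ 2 =
          3 * N ^ (p - 2) * (p ^ 2 * (T + D) ^ 2) := by ring
      have h4 : N ^ (p - 2) * N * S = N ^ (p - 1) * S := by rw [hN2e]
      nlinarith [h1, h2, h3, h4]
    have hS2term : N ^ (p - 2) * S ^ 2 ≤ (1/16) * (N ^ (p - 1) * S) := by
      have h1 : S * S ≤ (N / 16) * S := mul_le_mul_of_nonneg_right hS16 hS
      have h2 : N ^ (p - 2) * (S * S) ≤ N ^ (p - 2) * ((N / 16) * S) :=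
        mul_le_mul_of_nonneg_left h1 hNp2
      calc N ^ (p - 2) * S ^ 2 = N ^ (p - 2) * (S * S) := by ring
        _ ≤ N ^ (p - 2) * ((N / 16) * S) := h2
        _ = (1/16) * ((N ^ (p - 2) * N) * S) := by ring
        _ = (1/16) * (N ^ (p - 1) * S) := by rw [hN2e]
    have h64nn : (0:ℝ) ≤ 64 ^ p * S ^ p :=
      mul_nonneg (rpow_nonneg (by norm_num) _) hSp
    nlinarith [htay, hDterm, hquad, hS2term, hNS, h64nn]

lemma lin_AB {q f p y : ℝ} (hq1 : 1 < q) (hq2 : q ≤ 2) (hf : 0 < f) (hp : 2 ≤ p) :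
    q * f ^ (q - 1) * |y| ≤ f ^ q / (2 * p) + 2 / p * gammaQ q (p * y) f := by
  by_cases hA : |p * y| ≤ f
  · exact lin_A hq1 hq2 hf hp hA
  · have h1 := lin_B hq1 hq2 hf hp hA
    have h2 : 0 ≤ f ^ q / (2 * p) := by positivity
    linarith

noncomputable def normQ (q : ℝ) {d : ℕ} (x : Fin d → ℝ) : ℝ :=
  (∑ j, |x j| ^ q) ^ (1 / q)

set_option maxHeartbeats 2000000 in
theorem stmt7 (q p : ℝ) (hq1 : 1 < q) (hq2 : q ≤ 2) (hp : 2 ≤ p) (d : ℕ)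
    (x y : Fin d → ℝ) (hx : ∀ j, 0 < x j) :
    normQ q (x + y) ^ (p * q) - normQ q x ^ (p * q) -
      p * q * normQ q x ^ ((p - 1) * q) * ∑ j, x j ^ (q - 1) * y j ≤
    200 * normQ q x ^ ((p - 1) * q) * (∑ j, gammaQ q (p * y j) (x j)) +
      64 ^ p * (∑ j, gammaQ q (p * y j) (x j)) ^ p := by
  have hq0 : (0:ℝ) < q := by linarith
  have hp0 : (0:ℝ) < p := by linarith
  set N : ℝ := ∑ j, x j ^ q with hNdef
  set M : ℝ := ∑ j, |x j + y j| ^ q with hMdef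
  set S : ℝ := ∑ j, gammaQ q (p * y j) (x j) with hSdef
  set L : ℝ := ∑ j, x j ^ (q - 1) * y j with hLdef
  have hNnn : 0 ≤ N := Finset.sum_nonneg fun j _ => rpow_nonneg (hx j).le _
  have hMnn : 0 ≤ M := Finset.sum_nonneg fun j _ => rpow_nonneg (abs_nonneg _) _
  have hSnn : 0 ≤ S := Finset.sum_nonneg fun j _ => gamma_nonneg hq1 hq2 (hx j) _
  -- norm conversions
  have habsx : (∑ j, |x j| ^ q) = N := Finset.sum_congr rfl fun j _ => by
    rw [abs_of_pos (hx j)]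
  have habsxy : (∑ j, |(x + y) j| ^ q) = M := Finset.sum_congr rfl fun j _ => by
    rw [Pi.add_apply]
  have e1 : normQ q (x + y) ^ (p * q) = M ^ p := by
    rw [normQ, habsxy, ← Real.rpow_mul hMnn]
    congr 1
    field_simp
  have e2 : normQ q x ^ (p * q) = N ^ p := by
    rw [normQ, habsx, ← Real.rpow_mul hNnn]
    congr 1
    field_simp
  have e3 : normQ q x ^ ((p - 1) * q) = N ^ (p - 1) := by
    rw [normQ, habsx, ← Real.rpow_mul hNnn]
    congr 1
    field_simp
  rw [e1, e2, e3]
  -- scale bound for gamma : 6 * gammaQ q (y j) (x j) ≤ 6/p * gammaQ q (p * y j) (x j)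
  have hscale : ∀ j, 6 * gammaQ q (y j) (x j) ≤ 6 / p * gammaQ q (p * y j) (x j) := by
    intro j
    have h1 := gamma_scale (z := y j) hq1 hq2 (hx j) (by linarith : (1:ℝ) ≤ p)
    rw [div_mul_eq_mul_div, le_div_iff₀ hp0]
    nlinarith [h1]
  -- lower bound (Bregman nonnegativity)
  have hlow : N + q * L ≤ M := by
    rw [hLdef, hNdef, hMdef, Finset.mul_sum, ← Finset.sum_add_distrib]
    apply Finset.sum_le_sum
    intro j _
    have := breg_lower hq1 (hx j) (y j)
    linarith
  -- upper bound
  have hupp : M ≤ N + q * L + 6 / p * S := by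
    have key : ∀ j ∈ Finset.univ,
        |x j + y j| ^ q ≤ (x j ^ q + q * (x j ^ (q - 1) * y j))
          + 6 / p * gammaQ q (p * y j) (x j) := by
      intro j _
      have h1 := breg_upper hq1 hq2 (hx j) (y j)
      have h2 := hscale j
      linarith
    calc M ≤ ∑ j, ((x j ^ q + q * (x j ^ (q - 1) * y j))
          + 6 / p * gammaQ q (p * y j) (x j)) := Finset.sum_le_sum key
      _ = N + q * L + 6 / p * S := by
        rw [Finset.sum_add_distrib, Finset.sum_add_distrib, ← Finset.mul_sum, ← Finset.mul_sum]
  -- |T| bound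
  have habsterm : ∀ j, |q * (x j ^ (q - 1) * y j)| = q * x j ^ (q - 1) * |y j| := by
    intro j
    rw [abs_mul, abs_mul, abs_of_pos hq0, abs_of_pos (rpow_pos_of_pos (hx j) _), mul_assoc]
  have hT : |q * L| ≤ N / (2 * p) + 2 / p * S := by
    have h0 : |q * L| ≤ ∑ j, q * x j ^ (q - 1) * |y j| := by
      rw [hLdef, Finset.mul_sum]
      refine (Finset.abs_sum_le_sum_abs _ _).trans ?_
      exact le_of_eq (Finset.sum_congr rfl fun j _ => habsterm j)
    have h1 : ∑ j, q * x j ^ (q - 1) * |y j| ≤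
        ∑ j, (x j ^ q / (2 * p) + 2 / p * gammaQ q (p * y j) (x j)) :=
      Finset.sum_le_sum fun j _ => lin_AB hq1 hq2 (hx j) hp
    have h2 : ∑ j, (x j ^ q / (2 * p) + 2 / p * gammaQ q (p * y j) (x j))
        = N / (2 * p) + 2 / p * S := by
      rw [Finset.sum_add_distrib, ← Finset.sum_div, ← Finset.mul_sum]
    linarith
  -- Cauchy-Schwarz part
  have hqL : |q * L| ≤ ∑ j, q * x j ^ (q - 1) * |y j| := by
    rw [hLdef, Finset.mul_sum]
    refine (Finset.abs_sum_le_sum_abs _ _).trans ?_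
    exact le_of_eq (Finset.sum_congr rfl fun j _ => habsterm j)
  set A : Finset (Fin d) := Finset.univ.filter (fun j => |p * y j| ≤ x j) with hAdef
  set B : Finset (Fin d) := Finset.univ.filter (fun j => ¬ |p * y j| ≤ x j) with hBdef
  set TA : ℝ := ∑ j ∈ A, q * x j ^ (q - 1) * |y j| with hTAdef
  set TB : ℝ := ∑ j ∈ B, q * x j ^ (q - 1) * |y j| with hTBdef
  have hsplit : (∑ j, q * x j ^ (q - 1) * |y j|) = TA + TB :=
    (Finset.sum_filter_add_sum_filter_not _ _ _).symm
  have htermnn : ∀ j, 0 ≤ q * x j ^ (q - 1) * |y j| := fun j =>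
    mul_nonneg (mul_nonneg hq0.le (rpow_nonneg (hx j).le _)) (abs_nonneg _)
  have hTAnn : 0 ≤ TA := Finset.sum_nonneg fun j _ => htermnn j
  have hTBnn : 0 ≤ TB := Finset.sum_nonneg fun j _ => htermnn j
  have hSsub : ∀ s : Finset (Fin d), (∑ j ∈ s, gammaQ q (p * y j) (x j)) ≤ S :=
    fun s => Finset.sum_le_sum_of_subset_of_nonneg (Finset.subset_univ s)
      (fun j _ _ => gamma_nonneg hq1 hq2 (hx j) _)
  have hTB : p * TB ≤ 2 * S := by
    have h1 : TB ≤ ∑ j ∈ B, 2 / p * gammaQ q (p * y j) (x j) :=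
      Finset.sum_le_sum fun j hj =>
        lin_B hq1 hq2 (hx j) hp (by simpa using (Finset.mem_filter.mp hj).2)
    have h2 : (∑ j ∈ B, 2 / p * gammaQ q (p * y j) (x j)) =
        2 / p * ∑ j ∈ B, gammaQ q (p * y j) (x j) := by rw [Finset.mul_sum]
    have h3 := hSsub B
    have h4 : TB ≤ 2 / p * S := by
      rw [h2] at h1
      have : 2 / p * (∑ j ∈ B, gammaQ q (p * y j) (x j)) ≤ 2 / p * S :=
        mul_le_mul_of_nonneg_left h3 (by positivity)
      linarith
    have h5 : p * (2 / p * S) = 2 * S := by field_simp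
    nlinarith [mul_le_mul_of_nonneg_left h4 hp0.le]
  have hCS := Finset.sum_mul_sq_le_sq_mul_sq A (fun j => x j ^ (q / 2))
    (fun j => q * x j ^ (q / 2 - 1) * |y j|)
  have hTAeq : TA = ∑ j ∈ A, (x j ^ (q / 2)) * (q * x j ^ (q / 2 - 1) * |y j|) := by
    refine Finset.sum_congr rfl fun j _ => ?_
    have e : x j ^ (q / 2) * x j ^ (q / 2 - 1) = x j ^ (q - 1) := by
      rw [← Real.rpow_add (hx j)]
      congr 1
      ring
    calc q * x j ^ (q - 1) * |y j| = (x j ^ (q / 2) * x j ^ (q / 2 - 1)) * (q * |y j|) := by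
          rw [e]; ring
      _ = (x j ^ (q / 2)) * (q * x j ^ (q / 2 - 1) * |y j|) := by ring
  have hsq1 : (∑ j ∈ A, (x j ^ (q / 2)) ^ 2) ≤ N := by
    have e : ∀ j ∈ A, (x j ^ (q / 2)) ^ 2 = x j ^ q := by
      intro j _
      rw [sq, ← Real.rpow_add (hx j)]
      congr 1
      ring
    rw [Finset.sum_congr rfl e]
    exact Finset.sum_le_sum_of_subset_of_nonneg (Finset.subset_univ A)
      (fun j _ _ => rpow_nonneg (hx j).le _)
  have hsq2 : (∑ j ∈ A, (q * x j ^ (q / 2 - 1) * |y j|) ^ 2) ≤ 2 * q / p ^ 2 * S := by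
    have e : ∀ j ∈ A, (q * x j ^ (q / 2 - 1) * |y j|) ^ 2 =
        2 * q / p ^ 2 * gammaQ q (p * y j) (x j) := by
      intro j hj
      have hjA : |p * y j| ≤ x j := by simpa using (Finset.mem_filter.mp hj).2
      have e2 : (x j ^ (q / 2 - 1)) ^ 2 = x j ^ (q - 2) := by
        rw [sq, ← Real.rpow_add (hx j)]
        congr 1
        ring
      rw [gammaQ, if_pos hjA]
      calc (q * x j ^ (q / 2 - 1) * |y j|) ^ 2
          = q ^ 2 * (x j ^ (q / 2 - 1)) ^ 2 * |y j| ^ 2 := by ring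
        _ = q ^ 2 * x j ^ (q - 2) * y j ^ 2 := by rw [e2, sq_abs]
        _ = 2 * q / p ^ 2 * (q / 2 * x j ^ (q - 2) * (p * y j) ^ 2) := by
            field_simp
    rw [Finset.sum_congr rfl e, ← Finset.mul_sum]
    exact mul_le_mul_of_nonneg_left (hSsub A) (by positivity)
  -- p^2 TA^2 ≤ 4 N S
  have hTA2 : p ^ 2 * TA ^ 2 ≤ 4 * (N * S) := by
    have hg2nn : 0 ≤ ∑ j ∈ A, (q * x j ^ (q / 2 - 1) * |y j|) ^ 2 :=
      Finset.sum_nonneg fun j _ => sq_nonneg _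
    have step : TA ^ 2 ≤ N * (2 * q / p ^ 2 * S) := by
      rw [hTAeq]
      refine hCS.trans ?_
      exact mul_le_mul hsq1 hsq2 hg2nn hNnn
    have e : p ^ 2 * (N * (2 * q / p ^ 2 * S)) = 2 * q * (N * S) := by
      field_simp
    have h1 := mul_le_mul_of_nonneg_left step (by positivity : (0:ℝ) ≤ p ^ 2)
    rw [e] at h1
    linarith [mul_nonneg (by linarith : (0:ℝ) ≤ 2 - q) (mul_nonneg hNnn hSnn)]
  -- combine to quadratic bound
  have hL2 : (q * L) ^ 2 ≤ (TA + TB) ^ 2 := by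
    have h1 : |q * L| ≤ TA + TB := by rw [← hsplit]; exact hqL
    have h2 : |q * L| ^ 2 ≤ (TA + TB) ^ 2 := by
      apply pow_le_pow_left₀ (abs_nonneg _) h1
    rwa [sq_abs] at h2
  have hTB2 : (p * TB) ^ 2 ≤ 4 * S ^ 2 := by nlinarith [mul_nonneg hp0.le hTBnn]
  have hT2 : p ^ 2 * (q * L) ^ 2 ≤ 8 * N * S + 8 * S ^ 2 := by
    have h1 : p ^ 2 * (q * L) ^ 2 ≤ p ^ 2 * (TA + TB) ^ 2 :=
      mul_le_mul_of_nonneg_left hL2 (by positivity)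
    have h2 : p ^ 2 * (TA + TB) ^ 2 =
        2 * ((p * TA) ^ 2) + 2 * ((p * TB) ^ 2) - (p * TA - p * TB) ^ 2 := by ring
    have h3 : (p * TA) ^ 2 = p ^ 2 * TA ^ 2 := by ring
    nlinarith [sq_nonneg (p * TA - p * TB), hTA2, hTB2]
  -- apply main arithmetic lemma
  have hD0 : 0 ≤ M - N - q * L := by linarith
  have hD : M - N - q * L ≤ 6 / p * S := by linarith
  have big := main_arith hp hNnn hSnn
    (by linarith : (0:ℝ) ≤ N + q * L + (M - N - q * L)) hD0 hD hT hT2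
  have hMe : N + q * L + (M - N - q * L) = M := by ring
  rw [hMe] at big
  linarith
end

section
/- For every real x ≥ 0 and every real p ≥ 2, (1 + x)^p ≤ 1 + 3·p·x + 3·(p·x)^p. -/
-- exp t ≤ 1 + 3t for t ∈ [0,1]
lemma exp_le_one_add_three (t : ℝ) (h0 : 0 ≤ t) (h1 : t ≤ 1) :
    Real.exp t ≤ 1 + 3 * t := by
  have hu : Real.exp (-(t/2)) ≥ 1 - t/2 := by
    have := Real.add_one_le_exp (-(t/2)); linarith
  have hupos : 0 < Real.exp (t/2) := Real.exp_pos _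
  have hprod : (1 - t/2) * Real.exp (t/2) ≤ 1 := by
    have : Real.exp (-(t/2)) * Real.exp (t/2) = 1 := by
      rw [← Real.exp_add]; simp
    nlinarith
  have hsq : Real.exp t = Real.exp (t/2) * Real.exp (t/2) := by
    rw [← Real.exp_add]; ring_nf
  have ha : (0:ℝ) < 1 - t/2 := by linarith
  have hsq2 : ((1 - t/2) * Real.exp (t/2))^2 ≤ 1 := by
    have hnn : 0 ≤ (1 - t/2) * Real.exp (t/2) := by positivity
    nlinarith
  have hpoly : 1 ≤ (1 - t/2)^2 * (1 + 3*t) := by nlinarith [sq_nonneg (t - 1)]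
  have hb : Real.exp (t/2)^2 * (1 - t/2)^2 ≤ 1 := by nlinarith
  have : Real.exp (t/2)^2 ≤ 1 + 3*t := by
    have h2 : (0:ℝ) < (1 - t/2)^2 := by positivity
    nlinarith [sq_nonneg (Real.exp (t/2))]
  nlinarith

theorem stmt8 (x p : ℝ) (hx : 0 ≤ x) (hp : 2 ≤ p) :
    (1 + x) ^ p ≤ 1 + 3 * p * x + 3 * (p * x) ^ p := by
  have hp0 : 0 < p := by linarith
  have hpx0 : 0 ≤ p * x := by positivity
  have hrp : (0:ℝ) ≤ (p * x) ^ p := Real.rpow_nonneg hpx0 p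
  rcases le_or_gt 1 x with h1 | h1
  · -- x ≥ 1 : 1 + x ≤ p * x
    have h2 : 1 + x ≤ p * x := by nlinarith
    have h3 : (1 + x) ^ p ≤ (p * x) ^ p :=
      Real.rpow_le_rpow (by linarith) h2 hp0.le
    nlinarith
  · -- x < 1
    have hxe : (1 + x) ^ p ≤ Real.exp (p * x) := by
      calc (1 + x) ^ p ≤ (Real.exp x) ^ p :=
            Real.rpow_le_rpow (by linarith) (by linarith [Real.add_one_le_exp x]) hp0.le
        _ = Real.exp (p * x) := by rw [mul_comm p x, Real.exp_mul]
    rcases le_or_gt (p * x) 1 with h2 | h2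
    · have := exp_le_one_add_three (p * x) hpx0 h2
      nlinarith
    · -- p*x > 1 : exp (p*x) ≤ 3 * (p*x)^p
      set t := p * x with ht
      have ht1 : 1 < t := h2
      have htp : t ≤ p := by
        have : p * x ≤ p * 1 := by nlinarith
        simpa using this
      have hlog : 1 - 1/t ≤ Real.log t := by
        have h := Real.log_le_sub_one_of_pos (x := 1/t) (by positivity)
        rw [Real.log_div one_ne_zero (by positivity), Real.log_one] at h
        have : 1/t ≤ 1 := by
          rw [div_le_one (by linarith)]; linarith
        linarith
      have hlog0 : 0 ≤ Real.log t := Real.log_nonneg ht1.le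
      have hkey : t - 1 ≤ p * Real.log t := by
        have h3 : t - 1 ≤ t * Real.log t := by
          have := mul_le_mul_of_nonneg_left hlog (by linarith : (0:ℝ) ≤ t)
          have htne : t ≠ 0 := by linarith
          field_simp at this ⊢
          nlinarith
        nlinarith
      have hexp : Real.exp t ≤ Real.exp 1 * t ^ p := by
        rw [Real.rpow_def_of_pos (by linarith), ← Real.exp_add]
        apply Real.exp_le_exp.mpr
        nlinarith [hkey]
      have he3 : Real.exp 1 ≤ 3 := by
        have := Real.exp_one_lt_d9; linarith
      have hfin : Real.exp t ≤ 3 * t ^ p := by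
        have htp0 : (0:ℝ) ≤ t ^ p := Real.rpow_nonneg (by linarith) p
        nlinarith
      nlinarith [hxe, hfin]
end

section
/- Let A ∈ ℝ^{m×n}, let u ∈ ℝ^n have nonnegative entries, let v ∈ ℝ^m have strictly positive entries with Σ_i v_i = 1, and let ξ > 0 and ρ > 0 satisfy max_{i∈[m]} Σ_{j∈[n]} |A_{ij}|·(u_j + ξ) ≤ 2ρ. Then for all a ∈ ℝ^n, b ∈ ℝ^m, and τ > 0: |Σ_{i,j} b_i·A_{ij}·a_j| ≤ √ρ·τ·Σ_{i=1}^m b_i²/v_i + (√ρ/τ)·Σ_{j=1}^n (Σ_{i=1}^m |A_{ij}|·v_i)·a_j²/(u_j + ξ). -/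
/-!
Apply Young's inequality to each term `|b i| |A i j| |a j|` with the weight `c (u j + ξ) / v i`.
Summed over `j`, the `b`-part is controlled by the row-sum bound `2ρ`; summed over `i`, the
`a`-part produces the column weights `∑ i, |A i j| v i`. The choice `c = τ / (2 √ρ)` gives the
stated coefficients (with a factor `1/2` to spare on the first term).
-/

open Finset

lemma mul_le_half_mul_sq_add_sq_div (x y : ℝ) {c : ℝ} (hc : 0 < c) :
    x * y ≤ c / 2 * x ^ 2 + y ^ 2 / (2 * c) := by
  have h : 2 * c * (x * y) ≤ c ^ 2 * x ^ 2 + y ^ 2 := by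
    nlinarith [sq_nonneg (c * x - y)]
  have hsum : c / 2 * x ^ 2 + y ^ 2 / (2 * c) = (c ^ 2 * x ^ 2 + y ^ 2) / (2 * c) := by
    field_simp
  rw [hsum, le_div_iff₀ (by positivity)]
  linarith

lemma abs_mul_mul_le_weighted {b M a p w c : ℝ} (hp : 0 < p) (hw : 0 < w) (hc : 0 < c) :
    |b * M * a| ≤ c / 2 * (|M| * w) * (b ^ 2 / p) + 1 / (2 * c) * (|M| * p * a ^ 2 / w) := by
  have hyoung := mul_le_half_mul_sq_add_sq_div |b| |a| (show 0 < c * w / p by positivity)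
  have hM := mul_le_mul_of_nonneg_left hyoung (abs_nonneg M)
  rw [sq_abs, sq_abs] at hM
  calc |b * M * a| = |M| * (|b| * |a|) := by rw [abs_mul, abs_mul]; ring
    _ ≤ _ := hM
    _ = _ := by field_simp

theorem abs_sum_mul_mul_le {ι κ : Type*} [Fintype ι] [Fintype κ] (A : ι → κ → ℝ)
    {p : ι → ℝ} {w : κ → ℝ} (hp : ∀ i, 0 < p i) (hw : ∀ j, 0 < w j) {R : ℝ}
    (hrow : ∀ i, ∑ j, |A i j| * w j ≤ R) (a : κ → ℝ) (b : ι → ℝ) {c : ℝ} (hc : 0 < c) :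
    |∑ i, ∑ j, b i * A i j * a j| ≤
      c / 2 * R * ∑ i, b i ^ 2 / p i + 1 / (2 * c) * ∑ j, (∑ i, |A i j| * p i) * a j ^ 2 / w j :=
  calc |∑ i, ∑ j, b i * A i j * a j|
      ≤ ∑ i, ∑ j, |b i * A i j * a j| :=
        (abs_sum_le_sum_abs _ _).trans (sum_le_sum fun i _ => abs_sum_le_sum_abs _ _)
    _ ≤ ∑ i, ∑ j, (c / 2 * (|A i j| * w j) * (b i ^ 2 / p i)
          + 1 / (2 * c) * (|A i j| * p i * a j ^ 2 / w j)) :=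
        sum_le_sum fun i _ => sum_le_sum fun j _ => abs_mul_mul_le_weighted (hp i) (hw j) hc
    _ = c / 2 * ∑ i, (∑ j, |A i j| * w j) * (b i ^ 2 / p i)
          + 1 / (2 * c) * ∑ j, (∑ i, |A i j| * p i) * a j ^ 2 / w j := by
        simp only [sum_add_distrib, mul_sum, sum_mul, sum_div]
        rw [sum_comm (f := fun i j => 1 / (2 * c) * (|A i j| * p i * a j ^ 2 / w j))]
        simp only [mul_assoc]
    _ ≤ c / 2 * R * ∑ i, b i ^ 2 / p i
          + 1 / (2 * c) * ∑ j, (∑ i, |A i j| * p i) * a j ^ 2 / w j := by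
        rw [mul_assoc, mul_sum _ _ R]
        gcongr with i
        exacts [div_nonneg (sq_nonneg _) (hp i).le, hrow i]

theorem stmt12_general (m n : ℕ) (A : Fin m → Fin n → ℝ) (u : Fin n → ℝ) (v : Fin m → ℝ)
    (hu : ∀ j, 0 ≤ u j) (hv : ∀ i, 0 < v i)
    (ξ ρ : ℝ) (hξ : 0 < ξ) (hρ : 0 < ρ)
    (hrow : ∀ i, ∑ j, |A i j| * (u j + ξ) ≤ 2 * ρ)
    (a : Fin n → ℝ) (b : Fin m → ℝ) (τ : ℝ) (hτ : 0 < τ) :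
    |∑ i, ∑ j, b i * A i j * a j| ≤
      Real.sqrt ρ * τ * ∑ i, b i ^ 2 / v i +
      (Real.sqrt ρ / τ) * ∑ j, (∑ i, |A i j| * v i) * a j ^ 2 / (u j + ξ) := by
  set s := Real.sqrt ρ
  have hs : 0 < s := Real.sqrt_pos.mpr hρ
  have hss : s * s = ρ := Real.mul_self_sqrt hρ.le
  have hbound := abs_sum_mul_mul_le A hv (fun j => add_pos_of_nonneg_of_pos (hu j) hξ) hrow a b
    (show 0 < τ / (2 * s) by positivity)
  have hfirst : τ / (2 * s) / 2 * (2 * ρ) ≤ s * τ := by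
    rw [← hss]; field_simp; nlinarith
  have hsecond : 1 / (2 * (τ / (2 * s))) = s / τ := by
    field_simp
  rw [hsecond] at hbound
  refine hbound.trans (add_le_add_left (mul_le_mul_of_nonneg_right hfirst ?_) _)
  exact sum_nonneg fun i _ => div_nonneg (sq_nonneg _) (hv i).le

theorem stmt12 (m n : ℕ) (A : Fin m → Fin n → ℝ) (u : Fin n → ℝ) (v : Fin m → ℝ)
    (hu : ∀ j, 0 ≤ u j) (hv : ∀ i, 0 < v i) (hv1 : ∑ i, v i = 1)
    (ξ ρ : ℝ) (hξ : 0 < ξ) (hρ : 0 < ρ)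
    (hrow : ∀ i, ∑ j, |A i j| * (u j + ξ) ≤ 2 * ρ)
    (a : Fin n → ℝ) (b : Fin m → ℝ) (τ : ℝ) (hτ : 0 < τ) :
    |∑ i, ∑ j, b i * A i j * a j| ≤
      Real.sqrt ρ * τ * ∑ i, b i ^ 2 / v i +
      (Real.sqrt ρ / τ) * ∑ j, (∑ i, |A i j| * v i) * a j ^ 2 / (u j + ξ) :=
  stmt12_general m n A u v hu hv ξ ρ hξ hρ hrow a b τ hτ
end

section
/- Let Z ⊆ ℝ^N be a convex set, let r : Z → ℝ be convex and differentiable, and let z₁, z₂, z₃ ∈ Z with c = (z₁ + z₂ + z₃)/3. Define the Bregman divergence V_x(y) = r(y) − r(x) − ⟨∇r(x), y − x⟩. Then V_{z₁}(z₂) + V_{z₂}(z₃) + V_{z₁}(z₃) ≥ r(z₁) + r(z₂) + r(z₃) − 3·r(c). -/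
/-!
Add the tangent inequality at `z₁` towards the centroid `c`, taken three times, to the tangent
inequality at `z₂` towards `z₃`; the gradient terms match because
`3 (c - z₁) = (z₂ - z₁) + (z₃ - z₁)`.
-/

open AffineMap

/-- Along the segment `[x, y]`, `f` is a convex function of one variable whose derivative at `0`
is `f' (y - x)`, and this bounds the secant slope `f y - f x`. -/
theorem ConvexOn.add_fderiv_le {E : Type*} [NormedAddCommGroup E] [NormedSpace ℝ E]
    {s : Set E} {f : E → ℝ} {f' : E →L[ℝ] ℝ} {x y : E}
    (hf : ConvexOn ℝ s f) (hx : x ∈ s) (hy : y ∈ s) (hf' : HasFDerivAt f f' x) :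
    f x + f' (y - x) ≤ f y := by
  let ℓ : ℝ →ᵃ[ℝ] E := lineMap x y
  have hline : ConvexOn ℝ (ℓ ⁻¹' s) (f ∘ ℓ) := hf.comp_affineMap ℓ
  have hderiv : HasDerivAt (f ∘ ℓ) (f' (y - x)) 0 :=
    (by simpa [ℓ] using hf' : HasFDerivAt f f' (ℓ 0)).comp_hasDerivAt 0 hasDerivAt_lineMap
  have := hline.le_slope_of_hasDerivAt (x := 0) (y := 1) (by simpa [ℓ] using hx)
    (by simpa [ℓ] using hy) zero_lt_one hderiv
  simp only [slope_def_field, Function.comp_apply, ℓ, lineMap_apply_zero,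
    lineMap_apply_one] at this
  linarith

theorem ConvexOn.add_inner_gradient_le {E : Type*} [NormedAddCommGroup E] [InnerProductSpace ℝ E]
    [CompleteSpace E] {s : Set E} {f : E → ℝ} {g x y : E}
    (hf : ConvexOn ℝ s f) (hx : x ∈ s) (hy : y ∈ s) (hg : HasGradientAt f g x) :
    f x + inner ℝ g (y - x) ≤ f y := by
  simpa using hf.add_fderiv_le hx hy hg.hasFDerivAt

theorem stmt13_general {N : ℕ} (Z : Set (EuclideanSpace ℝ (Fin N)))
    (r : EuclideanSpace ℝ (Fin N) → ℝ) (g : EuclideanSpace ℝ (Fin N) → EuclideanSpace ℝ (Fin N))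
    (hconv : ConvexOn ℝ Z r) (hgrad : ∀ z ∈ Z, HasGradientAt r (g z) z)
    (z₁ z₂ z₃ : EuclideanSpace ℝ (Fin N)) (h1 : z₁ ∈ Z) (h2 : z₂ ∈ Z) (h3 : z₃ ∈ Z) :
    r z₁ + r z₂ + r z₃ - 3 * r ((3 : ℝ)⁻¹ • (z₁ + z₂ + z₃)) ≤
      (r z₂ - r z₁ - inner ℝ (g z₁) (z₂ - z₁)) +
      (r z₃ - r z₂ - inner ℝ (g z₂) (z₃ - z₂)) +
      (r z₃ - r z₁ - inner ℝ (g z₁) (z₃ - z₁)) := by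
  set c := (3 : ℝ)⁻¹ • (z₁ + z₂ + z₃)
  have hc : c ∈ Z := by
    have := hconv.1.sum_mem (t := Finset.univ) (w := fun _ : Fin 3 => (3 : ℝ)⁻¹)
      (z := ![z₁, z₂, z₃])
      (by simp) (by norm_num) (by simp [Fin.forall_fin_succ, h1, h2, h3])
    simpa [Fin.sum_univ_three, c, smul_add] using this
  have tangent_at_z₁ := hconv.add_inner_gradient_le h1 hc (hgrad z₁ h1)
  have tangent_at_z₂ := hconv.add_inner_gradient_le h2 h3 (hgrad z₂ h2)
  have hcentroid : (3 : ℝ) * inner ℝ (g z₁) (c - z₁) =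
      inner ℝ (g z₁) (z₂ - z₁) + inner ℝ (g z₁) (z₃ - z₁) := by
    rw [← inner_smul_right, ← inner_add_right]
    congr 1
    simp only [c]
    module
  linarith

theorem stmt13 {N : ℕ} (Z : Set (EuclideanSpace ℝ (Fin N))) (hZ : Convex ℝ Z)
    (r : EuclideanSpace ℝ (Fin N) → ℝ) (g : EuclideanSpace ℝ (Fin N) → EuclideanSpace ℝ (Fin N))
    (hconv : ConvexOn ℝ Z r) (hgrad : ∀ z ∈ Z, HasGradientAt r (g z) z)
    (z₁ z₂ z₃ : EuclideanSpace ℝ (Fin N)) (h1 : z₁ ∈ Z) (h2 : z₂ ∈ Z) (h3 : z₃ ∈ Z) :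
    r z₁ + r z₂ + r z₃ - 3 * r ((3 : ℝ)⁻¹ • (z₁ + z₂ + z₃)) ≤
      (r z₂ - r z₁ - inner ℝ (g z₁) (z₂ - z₁)) +
      (r z₃ - r z₂ - inner ℝ (g z₂) (z₃ - z₂)) +
      (r z₃ - r z₁ - inner ℝ (g z₁) (z₃ - z₁)) :=
  stmt13_general Z r g hconv hgrad z₁ z₂ z₃ h1 h2 h3
end

section
/- Let X be a convex subset of a real normed space with norm ‖·‖, let α > 0, L > 0, R > 0, δ ≥ 0. Let Γ : X → ℝ be convex and α-strongly convex with respect to ‖·‖, and let ζ : X → [0, R] be convex and L-Lipschitz with respect to ‖·‖. For C ≥ 0, suppose x_C ∈ X satisfies Γ(x_C) + C·ζ(x_C) ≤ Γ(x) + C·ζ(x) + δ for all x ∈ X. Then for all 0 ≤ C₁ < C₂: |ζ(x_{C₁}) − ζ(x_{C₂})| ≤ L·√((4δ + 2(C₂ − C₁)R)/α). -/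
theorem stmt15 {E : Type*} [NormedAddCommGroup E] [NormedSpace ℝ E]
    (X : Set E) (hX : Convex ℝ X)
    (α L R δ : ℝ) (hα : 0 < α) (hL : 0 < L) (hR : 0 < R) (hδ : 0 ≤ δ)
    (Γ ζ : E → ℝ)
    (hΓconv : ConvexOn ℝ X Γ)
    (hΓstrong : ∀ x ∈ X, ∀ y ∈ X,
      2 * Γ ((1 / 2 : ℝ) • (x + y)) + (α / 2) * ‖x - y‖ ^ 2 ≤ Γ x + Γ y)
    (hζconv : ConvexOn ℝ X ζ)
    (hζrange : ∀ x ∈ X, ζ x ∈ Set.Icc (0 : ℝ) R)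
    (hζlip : ∀ x ∈ X, ∀ y ∈ X, |ζ x - ζ y| ≤ L * ‖x - y‖)
    (xC : ℝ → E) (hmem : ∀ C, 0 ≤ C → xC C ∈ X)
    (hopt : ∀ C, 0 ≤ C → ∀ x ∈ X, Γ (xC C) + C * ζ (xC C) ≤ Γ x + C * ζ x + δ) :
    ∀ C₁ C₂ : ℝ, 0 ≤ C₁ → C₁ < C₂ →
      |ζ (xC C₁) - ζ (xC C₂)| ≤ L * Real.sqrt ((4 * δ + 2 * (C₂ - C₁) * R) / α) := by
  intro C₁ C₂ hC₁ hlt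
  have hC₂ : (0:ℝ) ≤ C₂ := le_of_lt (hC₁.trans_lt hlt)
  set x₁ := xC C₁ with hx₁def
  set x₂ := xC C₂ with hx₂def
  have hx₁ : x₁ ∈ X := hmem C₁ hC₁
  have hx₂ : x₂ ∈ X := hmem C₂ hC₂
  set m := (1 / 2 : ℝ) • (x₁ + x₂) with hmdef
  have hm : m ∈ X := by
    have := hX hx₁ hx₂ (by norm_num : (0:ℝ) ≤ 1/2) (by norm_num : (0:ℝ) ≤ 1/2)
      (by norm_num)
    simpa [hmdef, smul_add] using this
  -- convexity of ζ at midpoint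
  have hζm : ζ m ≤ (1/2) * ζ x₁ + (1/2) * ζ x₂ := by
    have := hζconv.2 hx₁ hx₂ (by norm_num : (0:ℝ) ≤ 1/2) (by norm_num : (0:ℝ) ≤ 1/2)
      (by norm_num)
    simpa [hmdef, smul_add, smul_eq_mul] using this
  -- approximate optimality
  have h1 : Γ x₁ + C₁ * ζ x₁ ≤ Γ m + C₁ * ζ m + δ := hopt C₁ hC₁ m hm
  have h2 : Γ x₂ + C₂ * ζ x₂ ≤ Γ m + C₂ * ζ m + δ := hopt C₂ hC₂ m hm
  have hζx₂ := hζrange x₂ hx₂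
  have hζmR := hζrange m hm
  -- turn h2 into a C₁-statement with extra (C₂-C₁)R error
  have h2' : Γ x₂ + C₁ * ζ x₂ ≤ Γ m + C₁ * ζ m + δ + (C₂ - C₁) * R := by
    nlinarith [hζx₂.1, hζx₂.2, hζmR.1, hζmR.2, sub_pos.mpr hlt]
  have hstrong := hΓstrong x₁ hx₁ x₂ hx₂
  have hsq : ‖x₁ - x₂‖ ^ 2 ≤ (4 * δ + 2 * (C₂ - C₁) * R) / α := by
    rw [le_div_iff₀ hα]
    nlinarith [hstrong, h1, h2', hζm]
  have hnorm : ‖x₁ - x₂‖ ≤ Real.sqrt ((4 * δ + 2 * (C₂ - C₁) * R) / α) := by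
    have := Real.sqrt_le_sqrt hsq
    rwa [Real.sqrt_sq (norm_nonneg _)] at this
  calc |ζ x₁ - ζ x₂| ≤ L * ‖x₁ - x₂‖ := hζlip x₁ hx₁ x₂ hx₂
    _ ≤ L * Real.sqrt ((4 * δ + 2 * (C₂ - C₁) * R) / α) := by
        exact mul_le_mul_of_nonneg_left hnorm hL.le
end
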